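/- arXiv:2301.05414 — 4 statements merged into one kernel-verified Lean document; each statement's English description precedes it below -/
import Mathlib

section
/- Let D ≥ 1, let Γ^a_{bc}(q) be smooth connection coefficients on ℝ^D symmetric in b,c, let Q^a(q) be smooth, and let M_{i₁...i_r}(t,q) for r = 0,1,…,m (with M(t,q) the scalar case r = 0) be smooth totally symmetric tensor fields. Define I(t,q,q̇) = Σ_{r=0}^{m} M_{i₁...i_r}(t,q) q̇^{i₁}⋯q̇^{i_r}. Then I is a first integral of the system q̈^a = −Γ^a_{bc}(q)q̇^bq̇^c − Q^a(q) (i.e. t ↦ I(t,q(t),q̇(t)) is constant along every C² solution) if and only if for every r = 0,1,…,m,m+1 the equations ∂_t M_{i₁...i_r} + M_{(i₁...i_{r−1}|i_r)} − (r+1) M_{i₁...i_r i_{r+1}} Q^{i_{r+1}} = 0 hold identically, with the conventions that M_{i₁...i_r} = 0 for r > m and that the covariant-derivative term is absent when r = 0. -/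
noncomputable section
open scoped BigOperators

/-- Points of the configuration space `ℝ^D`. -/
abbrev Vec (D : ℕ) := Fin D → ℝ

/-- Connection coefficients: `Conn D Γ` with `Γ q a b c = Γ^a_{bc}(q)`. -/
abbrev Conn (D : ℕ) := Vec D → Fin D → Fin D → Fin D → ℝ

/-- Totally covariant `r`-tensor fields on `ℝ^D`. -/
abbrev Tens (D r : ℕ) := Vec D → (Fin r → Fin D) → ℝ

/-- Partial derivative `∂f/∂q^j`. -/
def pd {D : ℕ} (j : Fin D) (f : Vec D → ℝ) (q : Vec D) : ℝ :=
  fderiv ℝ f q (Pi.single j 1)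

/-- Covariant derivative `T_{i₁...i_r|j}` (the last slot is the derivative index `j`):
`T_{i₁...i_r|j} = ∂T_{i₁...i_r}/∂q^j − Σ_k Γ^s_{i_k j} T_{i₁...s...i_r}`. -/
def covTens {D r : ℕ} (Γ : Conn D) (T : Tens D r) : Tens D (r + 1) :=
  fun q idx =>
    pd (idx (Fin.last r)) (fun p => T p fun k => idx k.castSucc) q
      - ∑ k : Fin r, ∑ s : Fin D,
          Γ q s (idx k.castSucc) (idx (Fin.last r)) *
            T q (Function.update (fun l => idx l.castSucc) k s)

/-- Symmetrization of a tensor over all of its indices. -/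
def symT {D r : ℕ} (T : Tens D r) : Tens D r :=
  fun q idx => (r.factorial : ℝ)⁻¹ * ∑ σ : Equiv.Perm (Fin r), T q (idx ∘ σ)

/-- Totally symmetric tensor field. -/
def IsSymTens {D r : ℕ} (T : Tens D r) : Prop :=
  ∀ (q : Vec D) (idx : Fin r → Fin D) (σ : Equiv.Perm (Fin r)), T q (idx ∘ σ) = T q idx

/-- Smooth tensor field. -/
def SmoothTens {D r : ℕ} (T : Tens D r) : Prop :=
  ∀ idx : Fin r → Fin D, ContDiff ℝ (⊤ : ℕ∞) fun q => T q idx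

/-- Generalized Killing tensor of order `r` for the connection `Γ`:
`T_{(i₁...i_r|i_{r+1})} = 0`. -/
def IsGenKT {D r : ℕ} (Γ : Conn D) (T : Tens D r) : Prop :=
  ∀ q idx, symT (covTens Γ T) q idx = 0

/-- `q, v` solve `q̈^a = -Γ^a_{bc}(q) q̇^b q̇^c - Q^a(q)` on the set `s ⊆ ℝ`. -/
def IsSolutionOn {D : ℕ} (Γ : Conn D) (Q : Vec D → Fin D → ℝ)
    (s : Set ℝ) (q v : ℝ → Vec D) : Prop :=
  ∀ t ∈ s, ∀ a : Fin D,
    HasDerivAt (fun τ => q τ a) (v t a) t ∧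
    HasDerivAt (fun τ => v τ a)
      (-(∑ b, ∑ c, Γ (q t) a b c * v t b * v t c) - Q (q t) a) t

/-- `I(t,q,q̇)` is a first integral of the system: it is constant along every
(C²) solution defined on an open interval. -/
def FirstIntegral {D : ℕ} (Γ : Conn D) (Q : Vec D → Fin D → ℝ)
    (I : ℝ → Vec D → Vec D → ℝ) : Prop :=
  ∀ (a b : ℝ) (q v : ℝ → Vec D), IsSolutionOn Γ Q (Set.Ioo a b) q v →
    ∀ t₁ ∈ Set.Ioo a b, ∀ t₂ ∈ Set.Ioo a b,
      I t₁ (q t₁) (v t₁) = I t₂ (q t₂) (v t₂)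

/-- The contraction `L_c Q^c` of a rank-1 tensor with the generalized forces. -/
def dotQ {D : ℕ} (L : Tens D 1) (Q : Vec D → Fin D → ℝ) (q : Vec D) : ℝ :=
  ∑ c, L q (fun _ => c) * Q q c

/-! Along a solution, `d/dt Σ_r M_{i₁…i_r}(t,q) q̇^{i₁}⋯q̇^{i_r}` is a polynomial of degree `m + 1`
in `q̇`: in the product rule the `∂_q M` terms and the `Γ`-terms coming from `q̈` combine into the
covariant derivative, while the force terms lower the degree by one, so that after symmetrization
its coefficient of degree `r` is the left-hand side of the `r`-th equation. Hence the equations make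
`I` constant along solutions. Conversely, every `(t, q, q̇)` is the initial datum of a local
solution (Picard–Lindelöf), so for a first integral this polynomial vanishes identically in `q̇`.
Scaling `q̇` separates its homogeneous parts, and a symmetric coefficient array with vanishing
contraction is zero, since differentiating in `q̇` along `e_j` contracts away one of its indices. -/

open Finset

lemma sum_fun_eq_sum_insertNth {α M : Type*} [Fintype α] [AddCommMonoid M] {r : ℕ}
    (k : Fin (r + 1)) (f : (Fin (r + 1) → α) → M) :
    ∑ idx, f idx = ∑ j, ∑ p : Fin r → α, f (Fin.insertNth k j p) := by
  rw [← (Fin.insertNthEquiv (fun _ => α) k).sum_comp, Fintype.sum_prod_type]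
  rfl

lemma prod_erase_eq_prod_succAbove {M : Type*} [CommMonoid M] {r : ℕ} (k : Fin (r + 1))
    (g : Fin (r + 1) → M) : ∏ l ∈ univ.erase k, g l = ∏ i, g (k.succAbove i) := by
  rw [← compl_singleton, ← Fin.image_succAbove_univ,
    prod_image fun _ _ _ _ h => Fin.succAbove_right_injective h]

lemma sum_sum_update {α M : Type*} [Fintype α] [DecidableEq α] [AddCommMonoid M] {r : ℕ}
    (k : Fin r) (f : (Fin r → α) → α → M) :
    ∑ p, ∑ s, f (Function.update p k s) (p k) = ∑ p, ∑ s, f p s := by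
  have hinv : Function.Involutive fun x : (Fin r → α) × α => (Function.update x.1 k x.2, x.1 k) :=
    fun x => by simp
  simpa only [Fintype.sum_prod_type, Function.Involutive.coe_toPerm] using
    Equiv.sum_comp hinv.toPerm fun x => f x.1 x.2

lemma sum_range_shift (A C F : ℕ → ℝ) {m : ℕ} (hA : A (m + 1) = 0) (hF₀ : F 0 = 0)
    (hF₁ : F (m + 1) = 0) (hF₂ : F (m + 2) = 0) :
    ∑ r ∈ range (m + 1), (A (r + 1) + C r - F (r + 2)) + (A 0 - F 1) =
      ∑ r ∈ range (m + 1), (A r + C r - F r) := by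
  simp only [sum_add_distrib, sum_sub_distrib]
  have hA' := sum_range_succ' A (m + 1)
  have hF' := sum_range_succ' (fun r => F (r + 1)) (m + 1)
  have hF'' := sum_range_succ' F (m + 1)
  rw [sum_range_succ] at hA' hF' hF''
  simp only [hA, hF₀, hF₁, hF₂] at hA' hF' hF''
  linarith

section

variable {D : ℕ}

def contract {r : ℕ} (c : (Fin r → Fin D) → ℝ) (v : Vec D) : ℝ :=
  ∑ idx, c idx * ∏ k, v (idx k)

def contractDeriv {r : ℕ} (c : (Fin r → Fin D) → ℝ) (v w : Vec D) : ℝ :=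
  ∑ idx, c idx * ∑ k, w (idx k) * ∏ l ∈ univ.erase k, v (idx l)

def IsSymmArray {r : ℕ} (c : (Fin r → Fin D) → ℝ) : Prop :=
  ∀ (idx : Fin r → Fin D) (σ : Equiv.Perm (Fin r)), c (idx ∘ σ) = c idx

section Contraction

variable {r : ℕ}

@[simp] lemma contract_zero (v : Vec D) : contract (0 : (Fin r → Fin D) → ℝ) v = 0 := by
  simp [contract]

lemma contract_add (c c' : (Fin r → Fin D) → ℝ) (v : Vec D) :
    contract (fun idx => c idx + c' idx) v = contract c v + contract c' v := by
  simp only [contract, add_mul, sum_add_distrib]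

lemma contract_sub (c c' : (Fin r → Fin D) → ℝ) (v : Vec D) :
    contract (fun idx => c idx - c' idx) v = contract c v - contract c' v := by
  simp only [contract, sub_mul, sum_sub_distrib]

lemma contract_const_mul (a : ℝ) (c : (Fin r → Fin D) → ℝ) (v : Vec D) :
    contract (fun idx => a * c idx) v = a * contract c v := by
  simp only [contract, mul_sum, mul_assoc]

lemma contract_smul (c : (Fin r → Fin D) → ℝ) (x : ℝ) (v : Vec D) :
    contract c (x • v) = x ^ r * contract c v := by
  simp only [contract, mul_sum, Pi.smul_apply, smul_eq_mul, prod_mul_distrib, prod_const,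
    card_univ, Fintype.card_fin]
  exact sum_congr rfl fun idx _ => by ring

lemma contract_eq_contract_snoc (c : (Fin (r + 1) → Fin D) → ℝ) (v : Vec D) :
    contract c v = contract (fun p => ∑ j, c (Fin.snoc p j) * v j) v := by
  simp only [contract, sum_fun_eq_sum_insertNth (Fin.last r), Fin.insertNth_last',
    Fin.prod_univ_castSucc, Fin.snoc_castSucc, Fin.snoc_last, sum_mul]
  rw [sum_comm]
  exact sum_congr rfl fun p _ => sum_congr rfl fun j _ => by ring

lemma contractDeriv_neg_sub {r : ℕ} (c : (Fin r → Fin D) → ℝ) (v w w' : Vec D) :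
    contractDeriv c v (fun a => -w a - w' a) = -contractDeriv c v w - contractDeriv c v w' := by
  simp only [contractDeriv, sub_mul, neg_mul, sum_sub_distrib, sum_neg_distrib, mul_sub, mul_neg]

lemma contract_symT (T : Tens D r) (q v : Vec D) :
    contract (symT T q) v = contract (T q) v := by
  have hperm : ∀ σ : Equiv.Perm (Fin r),
      ∑ idx : Fin r → Fin D, T q (idx ∘ σ) * ∏ k, v (idx k) = contract (T q) v := fun σ =>
    calc _ = ∑ idx : Fin r → Fin D, T q (idx ∘ σ) * ∏ k, v ((idx ∘ σ) k) :=
          sum_congr rfl fun idx _ => by rw [← Equiv.prod_comp σ fun k => v (idx k)]; rfl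
      _ = contract (T q) v :=
          (Equiv.arrowCongr σ.symm (Equiv.refl _)).sum_comp fun idx => T q idx * ∏ k, v (idx k)
  calc contract (symT T q) v = (r.factorial : ℝ)⁻¹ *
        ∑ σ : Equiv.Perm (Fin r), ∑ idx : Fin r → Fin D, T q (idx ∘ σ) * ∏ k, v (idx k) := by
        simp only [contract, symT, mul_assoc, sum_mul, ← mul_sum]
        rw [sum_comm]
    _ = contract (T q) v := by
        simp only [hperm, sum_const, card_univ, Fintype.card_perm, Fintype.card_fin, nsmul_eq_mul]
        field_simp

lemma contract_eq_zero_of_sum_eq_zero {N : ℕ} (c : (r : ℕ) → (Fin r → Fin D) → ℝ)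
    (h : ∀ v, ∑ s ∈ range N, contract (c s) v = 0) (hr : r < N) (v : Vec D) :
    contract (c r) v = 0 := by
  set p : Polynomial ℝ := ∑ s ∈ range N, Polynomial.C (contract (c s) v) * Polynomial.X ^ s
  have hp : p = 0 := Polynomial.funext fun x => by
    rw [Polynomial.eval_zero, ← h (x • v)]
    simp only [p, Polynomial.eval_finsetSum, Polynomial.eval_mul, Polynomial.eval_C,
      Polynomial.eval_pow, Polynomial.eval_X, contract_smul, mul_comm]
  have := congrArg (Polynomial.coeff · r) hp
  simpa only [p, Polynomial.finsetSum_coeff, Polynomial.coeff_C_mul_X_pow, sum_ite_eq,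
    mem_range.2 hr, if_true, Polynomial.coeff_zero] using this

lemma hasDerivAt_contract {c : ℝ → (Fin r → Fin D) → ℝ} {c' : (Fin r → Fin D) → ℝ}
    {v : ℝ → Vec D} {v' : Vec D} {t : ℝ} (hc : ∀ idx, HasDerivAt (fun τ => c τ idx) (c' idx) t)
    (hv : ∀ a, HasDerivAt (fun τ => v τ a) (v' a) t) :
    HasDerivAt (fun τ => contract (c τ) (v τ))
      (contract c' (v t) + contractDeriv (c t) (v t) v') t := by
  simp only [contract, contractDeriv, ← sum_add_distrib]
  refine HasDerivAt.fun_sum fun idx _ => ?_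
  have hprod := HasDerivAt.fun_finsetProd (u := univ) fun k _ => hv (idx k)
  refine ((hc idx).fun_mul hprod).congr_deriv ?_
  simp only [smul_eq_mul, mul_comm]

end Contraction

lemma isSymmArray_symT {r : ℕ} (T : Tens D r) (q : Vec D) : IsSymmArray (symT T q) := by
  intro idx σ
  simp only [symT]
  congr 1
  exact Equiv.sum_comp (Equiv.mulLeft σ) fun τ : Equiv.Perm (Fin r) => T q (idx ∘ τ)

namespace IsSymmArray

variable {r : ℕ} {c : (Fin (r + 1) → Fin D) → ℝ}

lemma apply_insertNth (hc : IsSymmArray c) (k : Fin (r + 1)) (j : Fin D) (p : Fin r → Fin D) :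
    c (Fin.insertNth k j p) = c (Fin.cons j p) := by
  rw [← Fin.cons_comp_cycleRange, hc]

lemma apply_snoc (hc : IsSymmArray c) (p : Fin r → Fin D) (j : Fin D) :
    c (Fin.snoc p j) = c (Fin.cons j p) := by
  rw [← Fin.insertNth_last', hc.apply_insertNth]

lemma cons (hc : IsSymmArray c) (j : Fin D) : IsSymmArray fun p => c (Fin.cons j p) := by
  intro p σ
  -- `decomposeFin.symm (0, σ)` fixes `0` and acts by `σ` on the successors.
  have hσ : (Fin.cons j p : Fin (r + 1) → Fin D) ∘ Equiv.Perm.decomposeFin.symm (0, σ) =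
      Fin.cons j (p ∘ σ) := by
    ext i
    refine Fin.cases ?_ (fun i => ?_) i <;>
      simp [Equiv.Perm.decomposeFin_symm_apply_zero, Equiv.Perm.decomposeFin_symm_apply_succ]
  simp only [← hσ]
  exact hc _ _

lemma contractDeriv_eq (hc : IsSymmArray c) (v w : Vec D) :
    contractDeriv c v w = (r + 1) * contract (fun p => ∑ j, c (Fin.cons j p) * w j) v := by
  have hslot : ∀ k : Fin (r + 1),
      ∑ idx : Fin (r + 1) → Fin D, c idx * (w (idx k) * ∏ l ∈ univ.erase k, v (idx l)) =
        ∑ j, ∑ p : Fin r → Fin D, c (Fin.cons j p) * (w j * ∏ i, v (p i)) := fun k => by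
    simp only [sum_fun_eq_sum_insertNth k, hc.apply_insertNth, prod_erase_eq_prod_succAbove k,
      Fin.insertNth_apply_same, Fin.insertNth_apply_succAbove]
  simp only [contractDeriv, contract, mul_sum, sum_mul]
  rw [sum_comm]
  simp only [hslot, sum_const, card_univ, Fintype.card_fin, nsmul_eq_mul, Nat.cast_add,
    Nat.cast_one]
  rw [sum_comm, mul_sum]
  exact sum_congr rfl fun p _ => by simp only [mul_sum, mul_assoc]

end IsSymmArray

theorem IsSymmArray.eq_zero_of_contract_eq_zero :
    ∀ {r : ℕ} {c : (Fin r → Fin D) → ℝ}, IsSymmArray c → (∀ v, contract c v = 0) → c = 0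
  | 0, c, _, h => funext fun idx => by simpa [contract, Subsingleton.elim idx default] using h 0
  | r + 1, c, hc, h => by
    have hcons : ∀ j, (fun p => c (Fin.cons j p)) = 0 := fun j =>
      eq_zero_of_contract_eq_zero (hc.cons j) fun v => by
        set e : Vec D := Pi.single j 1
        have hline : HasDerivAt (fun τ : ℝ => contract c (v + τ • e))
            ((r + 1) * contract (fun p => c (Fin.cons j p)) v) 0 := by
          have := hasDerivAt_contract (c := fun _ => c) (c' := 0) (v := fun τ => v + τ • e)
            (v' := e) (t := 0) (fun _ => hasDerivAt_const _ _) fun a => by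
              simpa using ((hasDerivAt_id (0 : ℝ)).mul_const (e a)).const_add (v a)
          simpa [hc.contractDeriv_eq, e, Pi.single_apply] using this
        have hconst : HasDerivAt (fun τ : ℝ => contract c (v + τ • e)) 0 0 := by
          simpa only [h] using hasDerivAt_const (0 : ℝ) (0 : ℝ)
        exact (mul_eq_zero.1 (hline.unique hconst)).resolve_left (by positivity)
    funext idx
    rw [← Fin.cons_self_tail idx]
    exact congrFun (hcons (idx 0)) (Fin.tail idx)

section CovariantDerivative

variable {r : ℕ}

lemma covTens_snoc (Γ : Conn D) (T : Tens D r) (q : Vec D) (p : Fin r → Fin D) (j : Fin D) :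
    covTens Γ T q (Fin.snoc p j) =
      pd j (fun x => T x p) q - ∑ k, ∑ s, Γ q s (p k) j * T q (Function.update p k s) := by
  simp only [covTens, Fin.snoc_castSucc, Fin.snoc_last]

lemma contract_sum_update (T : (Fin r → Fin D) → ℝ) (G : Fin D → Fin D → ℝ) (v : Vec D) :
    contract (fun p => ∑ k, ∑ s, G s (p k) * T (Function.update p k s)) v =
      contractDeriv T v fun a => ∑ s, G a s * v s := by
  have hslot : ∀ k : Fin r,
      ∑ p : Fin r → Fin D, ∑ s, G s (p k) * T (Function.update p k s) * ∏ l, v (p l) =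
        ∑ p : Fin r → Fin D, ∑ s, G (p k) s * T p * (v s * ∏ l ∈ univ.erase k, v (p l)) :=
    fun k => by
      rw [← sum_sum_update k fun p s => G (p k) s * T p * (v s * ∏ l ∈ univ.erase k, v (p l))]
      refine sum_congr rfl fun p _ => sum_congr rfl fun s _ => ?_
      have hprod : ∏ l ∈ univ.erase k, v (Function.update p k s l) =
          ∏ l ∈ univ.erase k, v (p l) :=
        prod_congr rfl fun l hl => by rw [Function.update_of_ne (ne_of_mem_erase hl)]
      rw [Function.update_self, hprod, mul_prod_erase univ (fun l => v (p l)) (mem_univ k)]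
  simp only [contract, contractDeriv, sum_mul, mul_sum]
  rw [sum_comm]
  simp only [hslot]
  rw [sum_comm]
  exact sum_congr rfl fun p _ => sum_congr rfl fun k _ => sum_congr rfl fun s _ => by ring

lemma contract_covTens (Γ : Conn D) (T : Tens D r) (q v : Vec D) :
    contract (covTens Γ T q) v =
      contract (fun p => ∑ j, pd j (fun x => T x p) q * v j) v -
        contractDeriv (T q) v fun a => ∑ b, ∑ c, Γ q a b c * v b * v c := by
  have hΓ : (fun a => ∑ b, ∑ c, Γ q a b c * v b * v c) =
      fun a => ∑ b, (∑ c, Γ q a b c * v c) * v b := by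
    simp only [sum_mul]
    exact funext fun a => sum_congr rfl fun b _ => sum_congr rfl fun c _ => by ring
  rw [hΓ, ← contract_sum_update, ← contract_sub, contract_eq_contract_snoc]
  refine congrArg (contract · v) (funext fun p => ?_)
  simp only [covTens_snoc, sub_mul, sum_sub_distrib, sum_mul]
  congr 1
  rw [sum_comm]
  refine sum_congr rfl fun k _ => ?_
  rw [sum_comm]
  exact sum_congr rfl fun s _ => sum_congr rfl fun j _ => by ring

end CovariantDerivative

lemma hasDerivAt_comp_prodMk {F : ℝ × Vec D → ℝ} {q : ℝ → Vec D} {v : Vec D} {t : ℝ}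
    (hF : DifferentiableAt ℝ F (t, q t)) (hq : ∀ a, HasDerivAt (fun τ => q τ a) (v a) t) :
    HasDerivAt (fun τ => F (τ, q τ))
      (deriv (fun τ => F (τ, q t)) t + ∑ j, pd j (fun x => F (t, x)) (q t) * v j) t := by
  set L := fderiv ℝ F (t, q t)
  have hL : HasFDerivAt F L (t, q t) := hF.hasFDerivAt
  have htime : HasDerivAt (fun τ => F (τ, q t)) (L (1, 0)) t :=
    hL.comp_hasDerivAt t ((hasDerivAt_id t).prodMk (hasDerivAt_const t (q t)))
  have hspace : ∀ j, pd j (fun x => F (t, x)) (q t) = L (0, Pi.single j 1) := fun j => by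
    rw [pd, show (fun x => F (t, x)) = F ∘ Prod.mk t from rfl,
      (hL.comp (q t) (hasFDerivAt_prodMk_right t (q t))).fderiv]
    rfl
  have hv : ((1 : ℝ), v) = (1, 0) + ∑ j, v j • ((0 : ℝ), (Pi.single j 1 : Vec D)) := by
    ext a
    · simp [Prod.fst_sum]
    · simp [Prod.snd_sum, Finset.sum_apply, Pi.single_apply]
  refine (hL.comp_hasDerivAt t ((hasDerivAt_id t).prodMk (hasDerivAt_pi.2 hq))).congr_deriv ?_
  simp only [hv, map_add, map_sum, map_smul, smul_eq_mul, htime.deriv, hspace, mul_comm]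

lemma exists_isSolutionOn (Γ : Conn D) (Q : Vec D → Fin D → ℝ)
    (hΓ : ∀ a b c, ContDiff ℝ (⊤ : ℕ∞) fun q => Γ q a b c)
    (hQ : ∀ a, ContDiff ℝ (⊤ : ℕ∞) fun q => Q q a) (t₀ : ℝ) (q₀ v₀ : Vec D) :
    ∃ ε > 0, ∃ q v : ℝ → Vec D,
      q t₀ = q₀ ∧ v t₀ = v₀ ∧ IsSolutionOn Γ Q (Set.Ioo (t₀ - ε) (t₀ + ε)) q v := by
  set V : Vec D × Vec D → Vec D × Vec D := fun x =>
    (x.2, fun a => -(∑ b, ∑ c, Γ x.1 a b c * x.2 b * x.2 c) - Q x.1 a)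
  have hcoord : ∀ i : Fin D, ContDiff ℝ (⊤ : ℕ∞) fun x : Vec D × Vec D => x.2 i := fun i =>
    (ContinuousLinearMap.proj i : Vec D →L[ℝ] ℝ).contDiff.comp contDiff_snd
  have hV : ContDiff ℝ (⊤ : ℕ∞) V := contDiff_snd.prodMk <| contDiff_pi.2 fun a =>
    (ContDiff.sum fun b _ => ContDiff.sum fun c _ =>
      (((hΓ a b c).comp contDiff_fst).mul (hcoord b)).mul (hcoord c)).neg.sub
      ((hQ a).comp contDiff_fst)
  have hV₁ : ContDiffAt ℝ 1 V (q₀, v₀) := (hV.of_le (mod_cast le_top)).contDiffAt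
  obtain ⟨f, hf₀, ε, hε, hf⟩ :=
    hV₁.exists_forall_mem_closedBall_exists_eq_forall_mem_Ioo_hasDerivAt₀ t₀
  exact ⟨ε, hε, fun τ => (f τ).1, fun τ => (f τ).2, by simp [hf₀], by simp [hf₀],
    fun t ht a => ⟨hasDerivAt_pi.1 (hf t ht).fst a, hasDerivAt_pi.1 (hf t ht).snd a⟩⟩

lemma IsSolutionOn.mono {Γ : Conn D} {Q : Vec D → Fin D → ℝ} {s s' : Set ℝ} {q v : ℝ → Vec D}
    (h : IsSolutionOn Γ Q s q v) (hs : s' ⊆ s) : IsSolutionOn Γ Q s' q v :=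
  fun t ht => h t (hs ht)

def pdeLHS (Γ : Conn D) (Q : Vec D → Fin D → ℝ) (M : (r : ℕ) → ℝ → Tens D r) (t : ℝ)
    (q : Vec D) : (r : ℕ) → (Fin r → Fin D) → ℝ
  | 0 => fun idx => deriv (fun τ => M 0 τ q idx) t
      - (1 : ℝ) * ∑ j, M 1 t q (Fin.snoc idx j) * Q q j
  | r + 1 => fun idx => deriv (fun τ => M (r + 1) τ q idx) t + symT (covTens Γ (M r t)) q idx
      - ((r + 2 : ℕ) : ℝ) * ∑ j, M (r + 2) t q (Fin.snoc idx j) * Q q j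

section PDE

variable {Γ : Conn D} {Q : Vec D → Fin D → ℝ} {M : (r : ℕ) → ℝ → Tens D r}

lemma isSymmArray_pdeLHS (hMsym : ∀ r t, IsSymTens (M r t)) (t : ℝ) (q : Vec D) (r : ℕ) :
    IsSymmArray (pdeLHS Γ Q M t q r) := by
  have hforce : ∀ r (idx : Fin r → Fin D) (σ : Equiv.Perm (Fin r)),
      ∑ j, M (r + 1) t q (Fin.snoc (idx ∘ σ) j) * Q q j =
        ∑ j, M (r + 1) t q (Fin.snoc idx j) * Q q j := fun r idx σ => by
    have hc : IsSymmArray (M (r + 1) t q) := hMsym (r + 1) t q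
    simp only [hc.apply_snoc, (hc.cons _) idx σ]
  intro idx σ
  cases r with
  | zero => simp only [pdeLHS, Subsingleton.elim (idx ∘ σ) idx]
  | succ r => simp only [pdeLHS, hMsym (r + 1) _ q idx σ, isSymmArray_symT _ q idx σ, hforce]

lemma contract_pdeLHS_zero (hMsym : ∀ r t, IsSymTens (M r t)) (t : ℝ) (q v : Vec D) :
    contract (pdeLHS Γ Q M t q 0) v =
      contract (fun idx => deriv (fun τ => M 0 τ q idx) t) v -
        contractDeriv (M 1 t q) v (Q q) := by
  have hc : IsSymmArray (M 1 t q) := hMsym 1 t q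
  simp only [pdeLHS, contract_sub, contract_const_mul, hc.apply_snoc, hc.contractDeriv_eq]
  simp

lemma contract_pdeLHS_succ (hMsym : ∀ r t, IsSymTens (M r t)) (t : ℝ) (q v : Vec D) (r : ℕ) :
    contract (pdeLHS Γ Q M t q (r + 1)) v =
      contract (fun idx => deriv (fun τ => M (r + 1) τ q idx) t) v +
        contract (covTens Γ (M r t) q) v - contractDeriv (M (r + 2) t q) v (Q q) := by
  have hc : IsSymmArray (M (r + 2) t q) := hMsym (r + 2) t q
  simp only [pdeLHS, contract_sub, contract_add, contract_const_mul, contract_symT, hc.apply_snoc,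
    hc.contractDeriv_eq]
  push_cast
  ring

section Solution

variable {q v : ℝ → Vec D} {t : ℝ}

lemma hasDerivAt_contract_of_isSolution
    (hMsm : ∀ (r : ℕ) (idx : Fin r → Fin D),
      ContDiff ℝ (⊤ : ℕ∞) fun p : ℝ × Vec D => M r p.1 p.2 idx)
    (hsol : IsSolutionOn Γ Q {t} q v)
    (r : ℕ) :
    HasDerivAt (fun τ => contract (M r τ (q τ)) (v τ))
      (contract (fun idx => deriv (fun τ => M r τ (q t) idx) t) (v t) +
        contract (covTens Γ (M r t) (q t)) (v t) -
          contractDeriv (M r t (q t)) (v t) (Q (q t))) t := by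
  have hM : ∀ idx, HasDerivAt (fun τ => M r τ (q τ) idx)
      (deriv (fun τ => M r τ (q t) idx) t + ∑ j, pd j (fun x => M r t x idx) (q t) * v t j) t :=
    fun idx => hasDerivAt_comp_prodMk (F := fun p => M r p.1 p.2 idx)
      ((hMsm r idx).differentiable (by simp) _) fun a => (hsol t rfl a).1
  refine (hasDerivAt_contract hM fun a => (hsol t rfl a).2).congr_deriv ?_
  rw [contract_add, contractDeriv_neg_sub, contract_covTens]
  ring

lemma hasDerivAt_sum_contract_of_isSolution {m : ℕ} (hMsym : ∀ r t, IsSymTens (M r t))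
    (hMsm : ∀ (r : ℕ) (idx : Fin r → Fin D),
      ContDiff ℝ (⊤ : ℕ∞) fun p : ℝ × Vec D => M r p.1 p.2 idx)
    (hMzero : ∀ r, m < r → ∀ t, M r t = fun _ _ => 0)
    (hsol : IsSolutionOn Γ Q {t} q v) :
    HasDerivAt (fun τ => ∑ r ∈ range (m + 1), contract (M r τ (q τ)) (v τ))
      (∑ r ∈ range (m + 2), contract (pdeLHS Γ Q M t (q t) r) (v t)) t := by
  refine (HasDerivAt.fun_sum fun r _ =>
    hasDerivAt_contract_of_isSolution hMsm hsol r).congr_deriv ?_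
  rw [sum_range_succ' (fun r => contract (pdeLHS Γ Q M t (q t) r) (v t)),
    contract_pdeLHS_zero hMsym,
    sum_congr rfl fun r _ => contract_pdeLHS_succ hMsym t (q t) (v t) r]
  refine (sum_range_shift
    (fun r => contract (fun idx => deriv (fun τ => M r τ (q t) idx) t) (v t))
    (fun r => contract (covTens Γ (M r t) (q t)) (v t))
    (fun r => contractDeriv (M r t (q t)) (v t) (Q (q t))) ?_ ?_ ?_ ?_).symm
  · simp [contract, hMzero (m + 1) (by omega)]
  · simp [contractDeriv]
  · simp [contractDeriv, hMzero (m + 1) (by omega)]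
  · simp [contractDeriv, hMzero (m + 2) (by omega)]

end Solution

theorem firstIntegral_iff_pdeLHS_eq_zero {m : ℕ}
    (hΓ : ∀ a b c, ContDiff ℝ (⊤ : ℕ∞) fun q => Γ q a b c)
    (hQ : ∀ a, ContDiff ℝ (⊤ : ℕ∞) fun q => Q q a)
    (hMsym : ∀ r t, IsSymTens (M r t))
    (hMsm : ∀ (r : ℕ) (idx : Fin r → Fin D),
      ContDiff ℝ (⊤ : ℕ∞) fun p : ℝ × Vec D => M r p.1 p.2 idx)
    (hMzero : ∀ r, m < r → ∀ t, M r t = fun _ _ => 0) :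
    FirstIntegral Γ Q (fun t q v => ∑ r ∈ range (m + 1), contract (M r t q) v) ↔
      ∀ t q, ∀ r < m + 2, pdeLHS Γ Q M t q r = 0 := by
  constructor
  · intro hI t q₀ r hr
    refine (isSymmArray_pdeLHS hMsym t q₀ r).eq_zero_of_contract_eq_zero
      (contract_eq_zero_of_sum_eq_zero _ (fun v₀ => ?_) hr)
    obtain ⟨ε, hε, q, v, rfl, rfl, hsol⟩ := exists_isSolutionOn Γ Q hΓ hQ t q₀ v₀
    have ht : t ∈ Set.Ioo (t - ε) (t + ε) := ⟨by linarith, by linarith⟩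
    have hconst : HasDerivAt (fun τ => ∑ r ∈ range (m + 1), contract (M r τ (q τ)) (v τ)) 0 t :=
      (hasDerivAt_const t _).congr_of_eventuallyEq <|
        Filter.eventually_of_mem (Ioo_mem_nhds ht.1 ht.2) fun τ hτ => hI _ _ q v hsol τ hτ t ht
    exact (hasDerivAt_sum_contract_of_isSolution hMsym hMsm hMzero
      (hsol.mono (Set.singleton_subset_iff.2 ht))).unique hconst
  · intro hE a b q v hsol t₁ ht₁ t₂ ht₂
    have hd : ∀ τ ∈ Set.Ioo a b,
        HasDerivAt (fun τ => ∑ r ∈ range (m + 1), contract (M r τ (q τ)) (v τ)) 0 τ :=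
      fun τ hτ => by
        convert hasDerivAt_sum_contract_of_isSolution hMsym hMsm hMzero
          (hsol.mono (Set.singleton_subset_iff.2 hτ))
        exact (sum_eq_zero fun r hr => by rw [hE τ (q τ) r (mem_range.1 hr), contract_zero]).symm
    exact isOpen_Ioo.is_const_of_deriv_eq_zero isPreconnected_Ioo
      (fun τ hτ => (hd τ hτ).differentiableAt.differentiableWithinAt) (fun τ hτ => (hd τ hτ).deriv)
      ht₁ ht₂

end PDE

end

theorem stmt0_general {D m : ℕ}
    (Γ : Conn D) (Q : Vec D → Fin D → ℝ)
    (hΓ : ∀ a b c, ContDiff ℝ (⊤ : ℕ∞) fun q => Γ q a b c)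
    (hQ : ∀ a, ContDiff ℝ (⊤ : ℕ∞) fun q => Q q a)
    (M : (r : ℕ) → ℝ → Tens D r)
    (hMsym : ∀ r t, IsSymTens (M r t))
    (hMsm : ∀ (r : ℕ) (idx : Fin r → Fin D),
      ContDiff ℝ (⊤ : ℕ∞) fun p : ℝ × Vec D => M r p.1 p.2 idx)
    (hMzero : ∀ r, m < r → ∀ t, M r t = fun _ _ => 0) :
    FirstIntegral Γ Q (fun t q v =>
      ∑ r ∈ Finset.range (m + 1), ∑ idx : Fin r → Fin D,
        M r t q idx * ∏ k : Fin r, v (idx k)) ↔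
    ((∀ (t : ℝ) (q : Vec D) (idx : Fin 0 → Fin D),
        deriv (fun τ => M 0 τ q idx) t
          - (1 : ℝ) * ∑ j, M 1 t q (Fin.snoc idx j) * Q q j = 0) ∧
      ∀ r : ℕ, r ≤ m → ∀ (t : ℝ) (q : Vec D) (idx : Fin (r + 1) → Fin D),
        deriv (fun τ => M (r + 1) τ q idx) t + symT (covTens Γ (M r t)) q idx
          - ((r + 2 : ℕ) : ℝ) * ∑ j, M (r + 2) t q (Fin.snoc idx j) * Q q j = 0) := by
  refine (firstIntegral_iff_pdeLHS_eq_zero hΓ hQ hMsym hMsm hMzero).trans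
    ⟨fun hE => ⟨fun t q => congrFun (hE t q 0 (by omega)),
      fun r hr t q => congrFun (hE t q (r + 1) (by omega))⟩, fun ⟨h₀, hsucc⟩ t q r hr => ?_⟩
  cases r with
  | zero => exact funext (h₀ t q)
  | succ r => exact funext (hsucc r (by omega) t q)

/-- `I = Σ_{r=0}^m M_{i₁...i_r}(t,q) q̇^{i₁}⋯q̇^{i_r}` is a first
integral of `q̈^a = −Γ^a_{bc} q̇^b q̇^c − Q^a` if and only if the system of PDEs
`∂_t M_{i₁...i_r} + M_{(i₁...i_{r−1}|i_r)} − (r+1) M_{i₁...i_r i_{r+1}} Q^{i_{r+1}} = 0`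
holds identically for `r = 0, 1, …, m, m+1` (with `M_{i₁...i_r} = 0` for `r > m`,
and with the covariant-derivative term absent when `r = 0`). -/
theorem stmt0 {D m : ℕ} (hD : 1 ≤ D)
    (Γ : Conn D) (Q : Vec D → Fin D → ℝ)
    (hΓsym : ∀ q a b c, Γ q a b c = Γ q a c b)
    (hΓ : ∀ a b c, ContDiff ℝ (⊤ : ℕ∞) fun q => Γ q a b c)
    (hQ : ∀ a, ContDiff ℝ (⊤ : ℕ∞) fun q => Q q a)
    (M : (r : ℕ) → ℝ → Tens D r)
    (hMsym : ∀ r t, IsSymTens (M r t))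
    (hMsm : ∀ (r : ℕ) (idx : Fin r → Fin D),
      ContDiff ℝ (⊤ : ℕ∞) fun p : ℝ × Vec D => M r p.1 p.2 idx)
    (hMzero : ∀ r, m < r → ∀ t, M r t = fun _ _ => 0) :
    FirstIntegral Γ Q (fun t q v =>
      ∑ r ∈ Finset.range (m + 1), ∑ idx : Fin r → Fin D,
        M r t q idx * ∏ k : Fin r, v (idx k)) ↔
    ((∀ (t : ℝ) (q : Vec D) (idx : Fin 0 → Fin D),
        deriv (fun τ => M 0 τ q idx) t
          - (1 : ℝ) * ∑ j, M 1 t q (Fin.snoc idx j) * Q q j = 0) ∧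
      ∀ r : ℕ, r ≤ m → ∀ (t : ℝ) (q : Vec D) (idx : Fin (r + 1) → Fin D),
        deriv (fun τ => M (r + 1) τ q idx) t + symT (covTens Γ (M r t)) q idx
          - ((r + 2 : ℕ) : ℝ) * ∑ j, M (r + 2) t q (Fin.snoc idx j) * Q q j = 0) :=
  stmt0_general Γ Q hΓ hQ M hMsym hMsm hMzero
end
end

section
/- (Theorem 1, Integral 2.) Let m ≥ 1 and λ ≠ 0. Suppose L_{i₁...i_r}(q), r = 1,…,m, are smooth totally symmetric tensor fields such that: (i) L_{i₁...i_m} is an m-th order generalized Killing tensor of Γ; (ii) if m > 1, L_{i₁...i_m} = −(1/λ) L_{(i₁...i_{m−1}|i_m)}; (iii) (L_c Q^c)_{,i₁} = 2λ L_{i₁i₂} Q^{i₂} − λ² L_{i₁}, the first term on the right being present only if m > 1; (iv) if m > 2, for r = 2,…,m−1: L_{(i₁...i_{r−1}|i_r)} = (r+1) L_{i₁...i_r i_{r+1}} Q^{i_{r+1}} − λ L_{i₁...i_r}. Then I = (e^{λt}/λ)(λ Σ_{r=1}^{m} L_{i₁...i_r} q̇^{i₁}⋯q̇^{i_r} + L_c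 Q^c) is a first integral of q̈^a = −Γ^a_{bc}q̇^bq̇^c − Q^a. -/
noncomputable section
open scoped BigOperators

/-! ### Auxiliary lemmas for the proof -/

namespace Stmt2Aux

open Finset

/-- Precomposition with a permutation, as an equivalence of index functions. -/
def permComp {n : ℕ} {β : Type*} (σ : Equiv.Perm (Fin n)) : (Fin n → β) ≃ (Fin n → β) where
  toFun g := g ∘ σ
  invFun g := g ∘ σ.symm
  left_inv g := by funext k; simp
  right_inv g := by funext k; simp

/-- `Fin.snoc` as an equivalence. -/
def snocEquiv (n : ℕ) (β : Type*) : ((Fin n → β) × β) ≃ (Fin (n + 1) → β) where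
  toFun p := Fin.snoc p.1 p.2
  invFun g := (fun k => g k.castSucc, g (Fin.last n))
  left_inv p := by simp
  right_inv g := by
    funext k
    cases k using Fin.lastCases <;> simp

lemma sum_split {β : Type*} [Fintype β] (n : ℕ) (F : (Fin (n + 1) → β) → ℝ) :
    ∑ idx : Fin (n + 1) → β, F idx
      = ∑ idx : Fin n → β, ∑ j : β, F (Fin.snoc idx j) := by
  rw [← (snocEquiv n β).sum_comp F, Fintype.sum_prod_type]
  rfl

lemma sum_perm_contract {D n : ℕ} (T : Tens D n) (p : Vec D) (w : Fin D → ℝ)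
    (σ : Equiv.Perm (Fin n)) :
    ∑ idx : Fin n → Fin D, T p (idx ∘ σ) * ∏ k, w (idx k)
      = ∑ idx : Fin n → Fin D, T p idx * ∏ k, w (idx k) := by
  calc ∑ idx : Fin n → Fin D, T p (idx ∘ σ) * ∏ k, w (idx k)
      = ∑ idx : Fin n → Fin D, T p (idx ∘ σ) * ∏ k, w (idx (σ k)) := by
        refine Finset.sum_congr rfl fun idx _ => ?_
        rw [Equiv.prod_comp σ (fun k => w (idx k))]
    _ = ∑ idx : Fin n → Fin D, T p idx * ∏ k, w (idx k) :=
        Equiv.sum_comp (permComp σ) (fun g => T p g * ∏ k, w (g k))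

lemma sum_symT_contract {D n : ℕ} (T : Tens D n) (p : Vec D) (w : Fin D → ℝ) :
    ∑ idx : Fin n → Fin D, symT T p idx * ∏ k, w (idx k)
      = ∑ idx : Fin n → Fin D, T p idx * ∏ k, w (idx k) := by
  have key : ∀ idx : Fin n → Fin D,
      symT T p idx * ∏ k, w (idx k)
        = (n.factorial : ℝ)⁻¹ *
            ∑ σ : Equiv.Perm (Fin n), T p (idx ∘ σ) * ∏ k, w (idx k) := by
    intro idx
    rw [symT, mul_assoc, Finset.sum_mul]
  rw [Finset.sum_congr rfl fun idx _ => key idx, ← Finset.mul_sum, Finset.sum_comm]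
  rw [Finset.sum_congr rfl fun σ _ => sum_perm_contract T p w σ]
  rw [Finset.sum_const, Finset.card_univ, nsmul_eq_mul, ← mul_assoc]
  rw [Fintype.card_perm, Fintype.card_fin]
  rw [inv_mul_cancel₀ (by exact_mod_cast n.factorial_ne_zero), one_mul]

lemma prod_update {n D : ℕ} (f : Fin D → ℝ) (g : Fin n → Fin D) (k : Fin n) (b : Fin D) :
    ∏ l : Fin n, f (Function.update g k b l)
      = f b * ∏ l ∈ Finset.univ.erase k, f (g l) := by
  have h : (fun l => f (Function.update g k b l))
      = Function.update (fun l => f (g l)) k (f b) := by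
    funext l
    by_cases hl : l = k
    · subst hl; simp
    · simp [Function.update_of_ne hl]
  calc ∏ l : Fin n, f (Function.update g k b l)
      = ∏ l : Fin n, Function.update (fun l => f (g l)) k (f b) l := by rw [h]
    _ = f b * ∏ l ∈ Finset.univ.erase k, f (g l) := by
        rw [Finset.prod_update_of_mem (Finset.mem_univ k), Finset.erase_eq]

lemma erase_last_eq_image (n : ℕ) :
    (Finset.univ.erase (Fin.last n)) = Finset.univ.image (Fin.castSucc (n := n)) := by
  ext l
  simp only [Finset.mem_erase, Finset.mem_univ, and_true, Finset.mem_image, true_and]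
  constructor
  · intro hl
    obtain ⟨k, hk⟩ := Fin.exists_castSucc_eq.mpr hl
    exact ⟨k, hk⟩
  · rintro ⟨k, rfl⟩
    exact (Fin.castSucc_lt_last k).ne

lemma prod_erase_last {n : ℕ} (f : Fin (n + 1) → ℝ) :
    ∏ l ∈ Finset.univ.erase (Fin.last n), f l = ∏ k : Fin n, f k.castSucc := by
  rw [erase_last_eq_image n,
    Finset.prod_image (fun a _ b _ h => Fin.castSucc_injective n h)]

lemma slot_indep {D n : ℕ} (L : Tens D n) (hL : IsSymTens L) (p : Vec D)
    (Qp w : Fin D → ℝ) (k k' : Fin n) :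
    ∑ idx : Fin n → Fin D, L p idx * (Qp (idx k) * ∏ l ∈ Finset.univ.erase k, w (idx l))
      = ∑ idx : Fin n → Fin D,
          L p idx * (Qp (idx k') * ∏ l ∈ Finset.univ.erase k', w (idx l)) := by
  set σ : Equiv.Perm (Fin n) := Equiv.swap k k' with hσ
  have h := Equiv.sum_comp (permComp (β := Fin D) σ)
    (fun g => L p g * (Qp (g k') * ∏ l ∈ Finset.univ.erase k', w (g l)))
  rw [← h]
  refine Finset.sum_congr rfl fun idx _ => ?_
  show L p idx * (Qp (idx k) * ∏ l ∈ Finset.univ.erase k, w (idx l))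
      = L p (idx ∘ σ) * (Qp (idx (σ k')) * ∏ l ∈ Finset.univ.erase k', w (idx (σ l)))
  have h1 : σ k' = k := Equiv.swap_apply_right k k'
  have h2 : ∏ l ∈ Finset.univ.erase k', w (idx (σ l))
      = ∏ l ∈ Finset.univ.erase k, w (idx l) := by
    rw [← Finset.prod_image (f := fun l => w (idx l))
      (fun a _ b _ hab => σ.injective hab)]
    congr 1
    rw [Finset.image_erase σ.injective, Finset.image_univ_of_surjective σ.surjective, h1]
  rw [hL p idx σ, h1, h2]

lemma sum_comm3 {α β γ : Type*} [Fintype α] [Fintype β] [Fintype γ]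
    (f : α → β → γ → ℝ) :
    ∑ a, ∑ b, ∑ c, f a b c = ∑ c, ∑ b, ∑ a, f a b c := by
  calc ∑ a, ∑ b, ∑ c, f a b c
      = ∑ a, ∑ c, ∑ b, f a b c := Finset.sum_congr rfl fun a _ => Finset.sum_comm
    _ = ∑ c, ∑ a, ∑ b, f a b c := Finset.sum_comm
    _ = ∑ c, ∑ b, ∑ a, f a b c := Finset.sum_congr rfl fun c _ => Finset.sum_comm

lemma hasDerivAt_comp_curve {D : ℕ} {q : ℝ → Vec D} {w : Vec D} {t : ℝ}
    (hq : ∀ a, HasDerivAt (fun τ => q τ a) (w a) t)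
    (f : Vec D → ℝ) (hf : DifferentiableAt ℝ f (q t)) :
    HasDerivAt (fun τ => f (q τ)) (∑ j, pd j f (q t) * w j) t := by
  have hq' : HasDerivAt q w t := hasDerivAt_pi.2 hq
  have h := hf.hasFDerivAt.comp_hasDerivAt t hq'
  convert! h using 1
  have hw : w = ∑ j, w j • (Pi.single j 1 : Vec D) := by
    funext k
    simp [Finset.sum_apply, Pi.single_apply, mul_ite]
  conv_rhs => rw [hw, map_sum]
  refine Finset.sum_congr rfl fun j _ => ?_
  rw [map_smul]
  simp [pd, mul_comm]

/-- The update/contraction bijection on pairs (index function, contracted index). -/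
def updEquiv {n D : ℕ} (k : Fin n) : ((Fin n → Fin D) × Fin D) ≃ ((Fin n → Fin D) × Fin D) where
  toFun x := (Function.update x.1 k x.2, x.1 k)
  invFun x := (Function.update x.1 k x.2, x.1 k)
  left_inv := fun ⟨f, s⟩ => by
    simp [Function.update_idem, Function.update_eq_self]
  right_inv := fun ⟨f, s⟩ => by
    simp [Function.update_idem, Function.update_eq_self]

lemma deriv_value_eq {D n : ℕ} (Γ : Conn D) (L : Tens D (n + 1)) (hLs : IsSymTens L)
    (Qf : Vec D → Fin D → ℝ) (p : Vec D) (w : Fin D → ℝ) :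
    ∑ idx : Fin (n + 1) → Fin D,
        ((∑ j, pd j (fun x => L x idx) p * w j) * ∏ k, w (idx k)
          + L p idx * ∑ k : Fin (n + 1), (∏ l ∈ Finset.univ.erase k, w (idx l)) *
              (-(∑ b, ∑ c, Γ p (idx k) b c * w b * w c) - Qf p (idx k)))
      = (∑ idx : Fin (n + 2) → Fin D, covTens Γ L p idx * ∏ k, w (idx k))
        - ((n + 1 : ℕ) : ℝ) * ∑ idx : Fin n → Fin D, ∑ j,
            L p (Fin.snoc idx j) * Qf p j * ∏ k, w (idx k) := by
  set P : ℝ := ∑ idx : Fin (n + 1) → Fin D,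
      (∑ j, pd j (fun x => L x idx) p * w j) * ∏ k, w (idx k) with hP
  set M : ℝ := ∑ idx : Fin (n + 1) → Fin D, ∑ k : Fin (n + 1),
      (∑ b, ∑ c, Γ p (idx k) b c * w b * w c) *
        (L p idx * ∏ l ∈ Finset.univ.erase k, w (idx l)) with hM
  set R : ℝ := ∑ idx : Fin (n + 1) → Fin D, ∑ k : Fin (n + 1),
      L p idx * (Qf p (idx k) * ∏ l ∈ Finset.univ.erase k, w (idx l)) with hR
  have stepA : ∑ idx : Fin (n + 1) → Fin D,
      ((∑ j, pd j (fun x => L x idx) p * w j) * ∏ k, w (idx k)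
        + L p idx * ∑ k : Fin (n + 1), (∏ l ∈ Finset.univ.erase k, w (idx l)) *
            (-(∑ b, ∑ c, Γ p (idx k) b c * w b * w c) - Qf p (idx k)))
      = P - M - R := by
    rw [Finset.sum_add_distrib, hP, hM, hR]
    have hb : ∀ idx : Fin (n + 1) → Fin D,
        L p idx * ∑ k : Fin (n + 1), (∏ l ∈ Finset.univ.erase k, w (idx l)) *
            (-(∑ b, ∑ c, Γ p (idx k) b c * w b * w c) - Qf p (idx k))
          = (∑ k : Fin (n + 1),
              -((∑ b, ∑ c, Γ p (idx k) b c * w b * w c) *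
                  (L p idx * ∏ l ∈ Finset.univ.erase k, w (idx l))))
            + ∑ k : Fin (n + 1),
              -(L p idx * (Qf p (idx k) * ∏ l ∈ Finset.univ.erase k, w (idx l))) := by
      intro idx
      rw [Finset.mul_sum, ← Finset.sum_add_distrib]
      exact Finset.sum_congr rfl fun k _ => by ring
    rw [Finset.sum_congr rfl fun idx _ => hb idx, Finset.sum_add_distrib]
    simp only [Finset.sum_neg_distrib]
    ring
  rw [stepA]
  have claim : ∀ (k : Fin (n + 1)) (j : Fin D),
      ∑ idx : Fin (n + 1) → Fin D, ∑ s : Fin D,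
          Γ p s (idx k) j * L p (Function.update idx k s) *
            ((∏ l, w (idx l)) * w j)
        = ∑ idx : Fin (n + 1) → Fin D, ∑ b : Fin D,
            Γ p (idx k) b j * w b * w j *
              (L p idx * ∏ l ∈ Finset.univ.erase k, w (idx l)) := by
    intro k j
    rw [← Fintype.sum_prod_type', ← Fintype.sum_prod_type']
    refine Fintype.sum_equiv (updEquiv k) _ _ fun x => ?_
    obtain ⟨idx, s⟩ := x
    show Γ p s (idx k) j * L p (Function.update idx k s) * ((∏ l, w (idx l)) * w j)
        = Γ p (Function.update idx k s k) (idx k) j * w (idx k) * w j *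
            (L p (Function.update idx k s) *
              ∏ l ∈ Finset.univ.erase k, w (Function.update idx k s l))
    rw [Function.update_self]
    have h1 : ∏ l ∈ Finset.univ.erase k, w (Function.update idx k s l)
        = ∏ l ∈ Finset.univ.erase k, w (idx l) :=
      Finset.prod_congr rfl fun l hl => by
        rw [Function.update_of_ne (Finset.ne_of_mem_erase hl)]
    have h2 : ∏ l, w (idx l)
        = w (idx k) * ∏ l ∈ Finset.univ.erase k, w (idx l) :=
      (Finset.mul_prod_erase Finset.univ _ (Finset.mem_univ k)).symm
    rw [h1, h2]; ring
  have stepB : ∑ idx : Fin (n + 2) → Fin D, covTens Γ L p idx * ∏ k, w (idx k)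
      = P - M := by
    rw [sum_split (n + 1)]
    have h1 : ∀ (idx : Fin (n + 1) → Fin D) (j : Fin D),
        covTens Γ L p (Fin.snoc idx j) * ∏ k : Fin (n + 2), w ((Fin.snoc idx j : Fin (n + 2) → Fin D) k)
          = pd j (fun x => L x idx) p * ((∏ k : Fin (n + 1), w (idx k)) * w j)
            - ∑ k : Fin (n + 1), ∑ s : Fin D,
                Γ p s (idx k) j * L p (Function.update idx k s) *
                  ((∏ l : Fin (n + 1), w (idx l)) * w j) := by
      intro idx j
      rw [Fin.prod_univ_castSucc]
      simp only [covTens, Fin.snoc_last, Fin.snoc_castSucc]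
      rw [sub_mul, Finset.sum_mul]
      congr 1
      exact Finset.sum_congr rfl fun k _ => by rw [Finset.sum_mul]
    rw [Finset.sum_congr rfl fun idx _ =>
      Finset.sum_congr rfl fun j _ => h1 idx j]
    rw [Finset.sum_congr rfl fun idx _ => Finset.sum_sub_distrib
      (s := (Finset.univ : Finset (Fin D))) _ _]
    rw [Finset.sum_sub_distrib]
    congr 1
    · rw [hP]
      refine Finset.sum_congr rfl fun idx _ => ?_
      rw [Finset.sum_mul]
      exact Finset.sum_congr rfl fun j _ => by ring
    · -- Γ parts agree
      rw [hM]
      calc ∑ idx : Fin (n + 1) → Fin D, ∑ j : Fin D,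
              ∑ k : Fin (n + 1), ∑ s : Fin D,
                Γ p s (idx k) j * L p (Function.update idx k s) *
                  ((∏ l : Fin (n + 1), w (idx l)) * w j)
          = ∑ k : Fin (n + 1), ∑ j : Fin D, ∑ idx : Fin (n + 1) → Fin D,
              ∑ s : Fin D, Γ p s (idx k) j * L p (Function.update idx k s) *
                ((∏ l : Fin (n + 1), w (idx l)) * w j) :=
            sum_comm3 _
        _ = ∑ k : Fin (n + 1), ∑ j : Fin D, ∑ idx : Fin (n + 1) → Fin D,
              ∑ b : Fin D, Γ p (idx k) b j * w b * w j *
                (L p idx * ∏ l ∈ Finset.univ.erase k, w (idx l)) :=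
            Finset.sum_congr rfl fun k _ =>
              Finset.sum_congr rfl fun j _ => claim k j
        _ = ∑ k : Fin (n + 1), ∑ idx : Fin (n + 1) → Fin D, ∑ j : Fin D,
              ∑ b : Fin D, Γ p (idx k) b j * w b * w j *
                (L p idx * ∏ l ∈ Finset.univ.erase k, w (idx l)) :=
            Finset.sum_congr rfl fun k _ => Finset.sum_comm
        _ = ∑ k : Fin (n + 1), ∑ idx : Fin (n + 1) → Fin D,
              (∑ b, ∑ c, Γ p (idx k) b c * w b * w c) *
                (L p idx * ∏ l ∈ Finset.univ.erase k, w (idx l)) := by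
            refine Finset.sum_congr rfl fun k _ => Finset.sum_congr rfl fun idx _ => ?_
            rw [Finset.sum_mul, Finset.sum_comm]
            refine Finset.sum_congr rfl fun b _ => ?_
            rw [Finset.sum_mul]
        _ = ∑ idx : Fin (n + 1) → Fin D, ∑ k : Fin (n + 1),
              (∑ b, ∑ c, Γ p (idx k) b c * w b * w c) *
                (L p idx * ∏ l ∈ Finset.univ.erase k, w (idx l)) :=
            Finset.sum_comm
  have stepC : R = ((n + 1 : ℕ) : ℝ) * ∑ idx : Fin n → Fin D, ∑ j,
      L p (Fin.snoc idx j) * Qf p j * ∏ k, w (idx k) := by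
    rw [hR, Finset.sum_comm]
    have hk : ∀ k : Fin (n + 1),
        ∑ idx : Fin (n + 1) → Fin D,
            L p idx * (Qf p (idx k) * ∏ l ∈ Finset.univ.erase k, w (idx l))
          = ∑ idx : Fin (n + 1) → Fin D,
              L p idx * (Qf p (idx (Fin.last n)) *
                ∏ l ∈ Finset.univ.erase (Fin.last n), w (idx l)) :=
      fun k => slot_indep L hLs p (Qf p) w k (Fin.last n)
    rw [Finset.sum_congr rfl fun k _ => hk k, Finset.sum_const, Finset.card_univ,
      Fintype.card_fin, nsmul_eq_mul]
    congr 1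
    rw [sum_split n]
    refine Finset.sum_congr rfl fun idx _ => Finset.sum_congr rfl fun j _ => ?_
    rw [Fin.snoc_last]
    have h3 : ∏ l ∈ Finset.univ.erase (Fin.last n), w ((Fin.snoc idx j : Fin (n + 1) → Fin D) l)
        = ∏ k : Fin n, w (idx k) := by
      rw [prod_erase_last (fun l => w ((Fin.snoc idx j : Fin (n + 1) → Fin D) l))]
      simp
    rw [h3]; ring
  rw [stepB, stepC]

/-- The contraction `L_{i₁...i_s} w^{i₁}⋯w^{i_s}`. -/
def AvT {D : ℕ} (L : (r : ℕ) → Tens D r) (p : Vec D) (w : Fin D → ℝ) (s : ℕ) : ℝ :=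
  ∑ idx : Fin s → Fin D, L s p idx * ∏ k : Fin s, w (idx k)

/-- The contraction `L_{i₁...i_s j} Q^j w^{i₁}⋯w^{i_s}`. -/
def BoT {D : ℕ} (L : (r : ℕ) → Tens D r) (Q : Vec D → Fin D → ℝ)
    (p : Vec D) (w : Fin D → ℝ) (s : ℕ) : ℝ :=
  ∑ idx : Fin s → Fin D, ∑ j,
    L (s + 1) p (Fin.snoc idx j) * Q p j * ∏ k : Fin s, w (idx k)

/-- The contraction of the covariant derivative of `L_{r+1}` with `r+2` velocities. -/
def CvT {D : ℕ} (Γ : Conn D) (L : (r : ℕ) → Tens D r)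
    (p : Vec D) (w : Fin D → ℝ) (r : ℕ) : ℝ :=
  ∑ idx : Fin (r + 2) → Fin D, covTens Γ (L (r + 1)) p idx * ∏ k : Fin (r + 2), w (idx k)

lemma tele2 (g : ℕ → ℝ) (m : ℕ) :
    ∑ r ∈ Finset.range m, (g (r + 2) - g r) = g (m + 1) + g m - (g 1 + g 0) := by
  have h1 : ∑ r ∈ Finset.range m, (g (r + 2) - g (r + 1)) = g (m + 1) - g 1 :=
    Finset.sum_range_sub (fun i => g (i + 1)) m
  have h2 : ∑ r ∈ Finset.range m, (g (r + 1) - g r) = g m - g 0 :=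
    Finset.sum_range_sub g m
  have h3 : ∀ r, g (r + 2) - g r = (g (r + 2) - g (r + 1)) + (g (r + 1) - g r) :=
    fun r => by ring
  rw [Finset.sum_congr rfl fun r _ => h3 r, Finset.sum_add_distrib, h1, h2]; ring

lemma eq_of_hasDerivAt_zero {a b : ℝ} {F : ℝ → ℝ}
    (h : ∀ t ∈ Set.Ioo a b, HasDerivAt F 0 t)
    {t₁ t₂ : ℝ} (h₁ : t₁ ∈ Set.Ioo a b) (h₂ : t₂ ∈ Set.Ioo a b) :
    F t₁ = F t₂ := by
  have key : ∀ s₁ s₂ : ℝ, s₁ ∈ Set.Ioo a b → s₂ ∈ Set.Ioo a b → s₁ ≤ s₂ →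
      F s₂ = F s₁ := by
    intro s₁ s₂ hs₁ hs₂ hle
    have hsub : Set.Icc s₁ s₂ ⊆ Set.Ioo a b := fun x hx =>
      ⟨lt_of_lt_of_le hs₁.1 hx.1, lt_of_le_of_lt hx.2 hs₂.2⟩
    exact constant_of_has_deriv_right_zero
      (fun x hx => (h x (hsub hx)).continuousAt.continuousWithinAt)
      (fun x hx => (h x (hsub (Set.Ico_subset_Icc_self hx))).hasDerivWithinAt)
      s₂ (Set.right_mem_Icc.2 hle)
  rcases le_total t₁ t₂ with hle | hle
  · exact (key t₁ t₂ h₁ h₂ hle).symm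
  · exact key t₂ t₁ h₂ h₁ hle

end Stmt2Aux

/-- Theorem 1, Integral 2. Here `L r` represents the totally
symmetric tensor `L_{i₁...i_r}`; components outside the admissible range
(`r = 0` or `r > m`) are absent, i.e. vanish, which encodes the
"present only if `m > 1`" conventions. -/
theorem stmt2 {D m : ℕ} (hm : 1 ≤ m) (lam : ℝ) (hlam : lam ≠ 0)
    (Γ : Conn D) (Q : Vec D → Fin D → ℝ)
    (hΓsym : ∀ q a b c, Γ q a b c = Γ q a c b)
    (hΓ : ∀ a b c, ContDiff ℝ (⊤ : ℕ∞) fun q => Γ q a b c)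
    (hQ : ∀ a, ContDiff ℝ (⊤ : ℕ∞) fun q => Q q a)
    (L : (r : ℕ) → Tens D r)
    (hLsm : ∀ r, SmoothTens (L r))
    (hLsym : ∀ r, IsSymTens (L r))
    (hL0 : ∀ r, r = 0 ∨ m < r → L r = fun _ _ => 0)
    -- (i) `L_{i₁...i_m}` is an m-th order generalized Killing tensor
    (hKT : IsGenKT Γ (L m))
    -- (ii) for `m > 1`: `L_{i₁...i_m} = −(1/λ) L_{(i₁...i_{m−1}|i_m)}`
    (hrec : ∀ m₀, m = m₀ + 1 → 1 ≤ m₀ →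
      ∀ q (idx : Fin (m₀ + 1) → Fin D),
        L (m₀ + 1) q idx = -(1 / lam) * symT (covTens Γ (L m₀)) q idx)
    -- (iii) `(L_c Q^c)_{,i₁} = 2λ L_{i₁i₂} Q^{i₂} − λ² L_{i₁}`
    (hc1 : ∀ q (i : Fin D),
      pd i (dotQ (L 1) Q) q =
        2 * lam * (∑ j, L 2 q ![i, j] * Q q j) - lam ^ 2 * L 1 q fun _ => i)
    -- (iv) for ranks `r = ρ+1 = 2,…,m−1`:
    -- `L_{(i₁...i_{r−1}|i_r)} = (r+1) L_{i₁...i_{r+1}} Q^{i_{r+1}} − λ L_{i₁...i_r}`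
    (hc2 : ∀ ρ, 1 ≤ ρ → ρ + 2 ≤ m →
      ∀ q (idx : Fin (ρ + 1) → Fin D),
        symT (covTens Γ (L ρ)) q idx =
          ((ρ + 2 : ℕ) : ℝ) * (∑ j, L (ρ + 2) q (Fin.snoc idx j) * Q q j)
            - lam * L (ρ + 1) q idx) :
    FirstIntegral Γ Q (fun t q v =>
      Real.exp (lam * t) / lam *
        (lam * ∑ r ∈ Finset.range m, ∑ idx : Fin (r + 1) → Fin D,
            L (r + 1) q idx * ∏ k : Fin (r + 1), v (idx k)
          + dotQ (L 1) Q q)) := by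
  intro a b q v hsol t₁ ht₁ t₂ ht₂
  classical
  open Stmt2Aux in
  suffices h : ∀ t ∈ Set.Ioo a b, HasDerivAt (fun t =>
      Real.exp (lam * t) / lam *
        (lam * ∑ r ∈ Finset.range m, ∑ idx : Fin (r + 1) → Fin D,
            L (r + 1) (q t) idx * ∏ k : Fin (r + 1), v t (idx k)
          + dotQ (L 1) Q (q t))) 0 t by
    exact Stmt2Aux.eq_of_hasDerivAt_zero h ht₁ ht₂
  intro t ht
  have hq : ∀ a', HasDerivAt (fun τ => q τ a') (v t a') t := fun a' => (hsol t ht a').1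
  have hv : ∀ a', HasDerivAt (fun τ => v τ a')
      (-(∑ b', ∑ c', Γ (q t) a' b' c' * v t b' * v t c') - Q (q t) a') t :=
    fun a' => (hsol t ht a').2
  -- vanishing of out-of-range contractions
  have hAzero : ∀ s, m < s → Stmt2Aux.AvT L (q t) (v t) s = 0 := by
    intro s hs
    show (∑ idx : Fin s → Fin D, L s (q t) idx * ∏ k : Fin s, v t (idx k)) = 0
    rw [hL0 s (Or.inr hs)]
    simp
  have hBzero : ∀ s, m < s + 1 → Stmt2Aux.BoT L Q (q t) (v t) s = 0 := by
    intro s hs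
    show (∑ idx : Fin s → Fin D, ∑ j,
        L (s + 1) (q t) (Fin.snoc idx j) * Q (q t) j * ∏ k : Fin s, v t (idx k)) = 0
    rw [hL0 (s + 1) (Or.inr hs)]
    simp
  -- derivative of each rank contraction
  have hA : ∀ r : ℕ, HasDerivAt
      (fun τ => ∑ idx : Fin (r + 1) → Fin D,
        L (r + 1) (q τ) idx * ∏ k : Fin (r + 1), v τ (idx k))
      (Stmt2Aux.CvT Γ L (q t) (v t) r
        - ((r + 1 : ℕ) : ℝ) * Stmt2Aux.BoT L Q (q t) (v t) r) t := by
    intro r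
    have hterm : ∀ idx : Fin (r + 1) → Fin D, HasDerivAt
        (fun τ => L (r + 1) (q τ) idx * ∏ k : Fin (r + 1), v τ (idx k))
        ((∑ j, pd j (fun x => L (r + 1) x idx) (q t) * v t j)
            * ∏ k : Fin (r + 1), v t (idx k)
          + L (r + 1) (q t) idx * ∑ k : Fin (r + 1),
              (∏ l ∈ Finset.univ.erase k, v t (idx l)) *
                (-(∑ b', ∑ c', Γ (q t) (idx k) b' c' * v t b' * v t c')
                  - Q (q t) (idx k))) t := by
      intro idx
      have h1 : HasDerivAt (fun τ => L (r + 1) (q τ) idx)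
          (∑ j, pd j (fun x => L (r + 1) x idx) (q t) * v t j) t :=
        Stmt2Aux.hasDerivAt_comp_curve hq _
          (((hLsm (r + 1) idx).differentiable (by simp)).differentiableAt)
      have h2 : HasDerivAt (fun τ => ∏ k : Fin (r + 1), v τ (idx k))
          (∑ k : Fin (r + 1), (∏ l ∈ Finset.univ.erase k, v t (idx l)) *
            (-(∑ b', ∑ c', Γ (q t) (idx k) b' c' * v t b' * v t c')
              - Q (q t) (idx k))) t := by
        have h := HasDerivAt.fun_finset_prod (u := (Finset.univ : Finset (Fin (r + 1))))
          (f := fun (k : Fin (r + 1)) (τ : ℝ) => v τ (idx k))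
          (f' := fun k => -(∑ b', ∑ c', Γ (q t) (idx k) b' c' * v t b' * v t c')
            - Q (q t) (idx k)) (x := t) (fun k _ => hv (idx k))
        simpa [smul_eq_mul] using h
      simpa using h1.fun_mul h2
    have hsum := HasDerivAt.fun_sum (u := (Finset.univ : Finset (Fin (r + 1) → Fin D)))
      (x := t) (fun idx _ => hterm idx)
    have hval := Stmt2Aux.deriv_value_eq Γ (L (r + 1)) (hLsym (r + 1)) Q (q t) (v t)
    rw [hval] at hsum
    exact hsum
  -- the key structural identity for the covariant-derivative contractions
  have hI : ∀ r, r < m →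
      Stmt2Aux.CvT Γ L (q t) (v t) r
        = ((r : ℝ) + 3) * Stmt2Aux.BoT L Q (q t) (v t) (r + 2)
          - lam * Stmt2Aux.AvT L (q t) (v t) (r + 2) := by
    intro r hr
    have hCs : Stmt2Aux.CvT Γ L (q t) (v t) r
        = ∑ idx : Fin (r + 2) → Fin D,
            symT (covTens Γ (L (r + 1))) (q t) idx * ∏ k : Fin (r + 2), v t (idx k) :=
      (Stmt2Aux.sum_symT_contract _ _ _).symm
    rcases (by omega : r + 3 ≤ m ∨ r + 2 = m ∨ r + 1 = m) with hcase | hcase | hcase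
    · -- middle ranks: use (iv)
      have hc2' : ∀ idx : Fin (r + 2) → Fin D,
          symT (covTens Γ (L (r + 1))) (q t) idx
            = (((r + 1) + 2 : ℕ) : ℝ) *
                (∑ j, L ((r + 1) + 2) (q t) (Fin.snoc idx j) * Q (q t) j)
              - lam * L ((r + 1) + 1) (q t) idx :=
        fun idx => hc2 (r + 1) (by omega) (by omega) (q t) idx
    
      have key : Stmt2Aux.CvT Γ L (q t) (v t) r
          = (((r + 1) + 2 : ℕ) : ℝ) * Stmt2Aux.BoT L Q (q t) (v t) (r + 2)
            - lam * Stmt2Aux.AvT L (q t) (v t) (r + 2) := by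
        rw [hCs]
        calc ∑ idx : Fin (r + 2) → Fin D,
                symT (covTens Γ (L (r + 1))) (q t) idx * ∏ k : Fin (r + 2), v t (idx k)
            = ∑ idx : Fin (r + 2) → Fin D,
                ((((r + 1) + 2 : ℕ) : ℝ) *
                    (∑ j, L ((r + 1) + 2) (q t) (Fin.snoc idx j) * Q (q t) j)
                  - lam * L ((r + 1) + 1) (q t) idx) * ∏ k : Fin (r + 2), v t (idx k) :=
              Finset.sum_congr rfl fun idx _ => by rw [hc2' idx]
          _ = ∑ idx : Fin (r + 2) → Fin D,
                ((((r + 1) + 2 : ℕ) : ℝ) *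
                    ∑ j, L ((r + 2) + 1) (q t) (Fin.snoc idx j) * Q (q t) j *
                      ∏ k : Fin (r + 2), v t (idx k)
                  - lam * (L (r + 2) (q t) idx * ∏ k : Fin (r + 2), v t (idx k))) := by
              refine Finset.sum_congr rfl fun idx _ => ?_
              rw [sub_mul, mul_assoc, Finset.sum_mul, mul_assoc]
          _ = (((r + 1) + 2 : ℕ) : ℝ) *
                (∑ idx : Fin (r + 2) → Fin D, ∑ j,
                  L ((r + 2) + 1) (q t) (Fin.snoc idx j) * Q (q t) j *
                    ∏ k : Fin (r + 2), v t (idx k))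
              - lam * ∑ idx : Fin (r + 2) → Fin D,
                  L (r + 2) (q t) idx * ∏ k : Fin (r + 2), v t (idx k) := by
              rw [Finset.sum_sub_distrib, Finset.mul_sum, Finset.mul_sum]
          _ = (((r + 1) + 2 : ℕ) : ℝ) * Stmt2Aux.BoT L Q (q t) (v t) (r + 2)
              - lam * Stmt2Aux.AvT L (q t) (v t) (r + 2) := rfl
      rw [key]
      push_cast
      ring
    · -- rank m − 1: use (ii)
      have hs : ∀ idx : Fin (r + 2) → Fin D,
          symT (covTens Γ (L (r + 1))) (q t) idx = -lam * L (r + 2) (q t) idx := by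
        intro idx
        have h' : L (r + 2) (q t) idx
            = -(1 / lam) * symT (covTens Γ (L (r + 1))) (q t) idx :=
          hrec (r + 1) (by omega) (by omega) (q t) idx
        rw [h']
        field_simp
      have key : Stmt2Aux.CvT Γ L (q t) (v t) r
          = -lam * Stmt2Aux.AvT L (q t) (v t) (r + 2) := by
        rw [hCs]
        calc ∑ idx : Fin (r + 2) → Fin D,
                symT (covTens Γ (L (r + 1))) (q t) idx * ∏ k : Fin (r + 2), v t (idx k)
            = ∑ idx : Fin (r + 2) → Fin D,
                -lam * (L (r + 2) (q t) idx * ∏ k : Fin (r + 2), v t (idx k)) := by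
              refine Finset.sum_congr rfl fun idx _ => ?_
              rw [hs idx, mul_assoc]
          _ = -lam * ∑ idx : Fin (r + 2) → Fin D,
                L (r + 2) (q t) idx * ∏ k : Fin (r + 2), v t (idx k) := by
              rw [Finset.mul_sum]
          _ = -lam * Stmt2Aux.AvT L (q t) (v t) (r + 2) := rfl
      rw [key, hBzero (r + 2) (by omega)]
      ring
    · -- top rank: Killing tensor condition (i)
      have hs : ∀ idx : Fin (r + 2) → Fin D,
          symT (covTens Γ (L (r + 1))) (q t) idx = 0 := by
        subst hcase
        exact fun idx => hKT (q t) idx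
      have key : Stmt2Aux.CvT Γ L (q t) (v t) r = 0 := by
        rw [hCs]
        exact Finset.sum_eq_zero fun idx _ => by rw [hs idx, zero_mul]
      rw [key, hBzero (r + 2) (by omega), hAzero (r + 2) (by omega)]
      ring
  -- derivative of the force contraction
  have hCd : HasDerivAt (fun τ => dotQ (L 1) Q (q τ))
      (2 * lam * Stmt2Aux.BoT L Q (q t) (v t) 1
        - lam ^ 2 * Stmt2Aux.AvT L (q t) (v t) 1) t := by
    have hsm : ContDiff ℝ (⊤ : ℕ∞) (fun x => ∑ c, L 1 x (fun _ => c) * Q x c) :=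
      ContDiff.sum fun c _ => (hLsm 1 _).mul (hQ c)
    have h := Stmt2Aux.hasDerivAt_comp_curve hq (dotQ (L 1) Q)
      ((hsm.differentiable (by simp)).differentiableAt)
    have hval2 : ∑ i, pd i (dotQ (L 1) Q) (q t) * v t i
        = 2 * lam * Stmt2Aux.BoT L Q (q t) (v t) 1
          - lam ^ 2 * Stmt2Aux.AvT L (q t) (v t) 1 := by
      calc ∑ i, pd i (dotQ (L 1) Q) (q t) * v t i
          = ∑ i, (2 * lam * (∑ j, L 2 (q t) ![i, j] * Q (q t) j)
              - lam ^ 2 * L 1 (q t) (fun _ => i)) * v t i :=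
            Finset.sum_congr rfl fun i _ => by rw [hc1 (q t) i]
        _ = 2 * lam * (∑ i, ∑ j, L 2 (q t) ![i, j] * Q (q t) j * v t i)
            - lam ^ 2 * ∑ i, L 1 (q t) (fun _ => i) * v t i := by
            rw [Finset.mul_sum, Finset.mul_sum, ← Finset.sum_sub_distrib]
            refine Finset.sum_congr rfl fun i _ => ?_
            rw [sub_mul, mul_assoc (2 * lam), mul_assoc (lam ^ 2), Finset.sum_mul]
        _ = 2 * lam * Stmt2Aux.BoT L Q (q t) (v t) 1
            - lam ^ 2 * Stmt2Aux.AvT L (q t) (v t) 1 := by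
            congr 1
            · congr 1
              show _ = ∑ idx : Fin 1 → Fin D, ∑ j,
                  L 2 (q t) (Fin.snoc idx j) * Q (q t) j * ∏ k : Fin 1, v t (idx k)
              rw [← Equiv.sum_comp (Equiv.funUnique (Fin 1) (Fin D)).symm
                (fun idx => ∑ j, L 2 (q t) (Fin.snoc idx j) * Q (q t) j *
                  ∏ k : Fin 1, v t (idx k))]
              refine Finset.sum_congr rfl fun i _ => Finset.sum_congr rfl fun j _ => ?_
              have h1 : (Fin.snoc ((Equiv.funUnique (Fin 1) (Fin D)).symm i) j
                  : Fin 2 → Fin D) = ![i, j] := by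
                funext k
                fin_cases k <;> simp [Fin.snoc, Equiv.funUnique]
              rw [h1]
              simp [Equiv.funUnique]
            · congr 1
              show _ = ∑ idx : Fin 1 → Fin D, L 1 (q t) idx * ∏ k : Fin 1, v t (idx k)
              rw [← Equiv.sum_comp (Equiv.funUnique (Fin 1) (Fin D)).symm
                (fun idx => L 1 (q t) idx * ∏ k : Fin 1, v t (idx k))]
              refine Finset.sum_congr rfl fun i _ => ?_
              have hfu : ((Equiv.funUnique (Fin 1) (Fin D)).symm i) = fun _ : Fin 1 => i := rfl
              rw [hfu, Fin.prod_univ_one]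
    rw [hval2] at h
    exact h
  -- identification of `BoT 0` with the force contraction
  have hB0eq : Stmt2Aux.BoT L Q (q t) (v t) 0 = dotQ (L 1) Q (q t) := by
    show (∑ idx : Fin 0 → Fin D, ∑ j,
        L 1 (q t) (Fin.snoc idx j) * Q (q t) j * ∏ k : Fin 0, v t (idx k))
      = ∑ c, L 1 (q t) (fun _ => c) * Q (q t) c
    rw [Finset.univ_unique, Finset.sum_singleton]
    refine Finset.sum_congr rfl fun c _ => ?_
    have h1 : (Fin.snoc (default : Fin 0 → Fin D) c : Fin 1 → Fin D) = fun _ => c := by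
      funext k
      simp [Fin.snoc]
    rw [h1]
    simp
  -- the final algebraic cancellation
  set g : ℕ → ℝ := fun s => ((s + 1 : ℕ) : ℝ) * Stmt2Aux.BoT L Q (q t) (v t) s with hg
  have halg :
      lam * (∑ r ∈ Finset.range m,
          (Stmt2Aux.CvT Γ L (q t) (v t) r
            - ((r + 1 : ℕ) : ℝ) * Stmt2Aux.BoT L Q (q t) (v t) r))
        + (2 * lam * Stmt2Aux.BoT L Q (q t) (v t) 1
            - lam ^ 2 * Stmt2Aux.AvT L (q t) (v t) 1)
      = -lam * (lam * ∑ r ∈ Finset.range m, Stmt2Aux.AvT L (q t) (v t) (r + 1)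
          + Stmt2Aux.BoT L Q (q t) (v t) 0) := by
    have e1 : ∀ r ∈ Finset.range m,
        Stmt2Aux.CvT Γ L (q t) (v t) r
            - ((r + 1 : ℕ) : ℝ) * Stmt2Aux.BoT L Q (q t) (v t) r
          = (g (r + 2) - g r) + -lam * Stmt2Aux.AvT L (q t) (v t) (r + 2) := by
      intro r hr
      rw [hI r (Finset.mem_range.mp hr), hg]
      push_cast
      ring
    rw [Finset.sum_congr rfl e1, Finset.sum_add_distrib, Stmt2Aux.tele2 g m,
      ← Finset.mul_sum]
    have e2 : ∑ r ∈ Finset.range m, Stmt2Aux.AvT L (q t) (v t) (r + 2)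
        = ∑ r ∈ Finset.range m, Stmt2Aux.AvT L (q t) (v t) (r + 1)
          + (Stmt2Aux.AvT L (q t) (v t) (m + 1) - Stmt2Aux.AvT L (q t) (v t) 1) := by
      have h2 : ∑ r ∈ Finset.range m,
          (Stmt2Aux.AvT L (q t) (v t) (r + 2) - Stmt2Aux.AvT L (q t) (v t) (r + 1))
          = Stmt2Aux.AvT L (q t) (v t) (m + 1) - Stmt2Aux.AvT L (q t) (v t) 1 :=
        Finset.sum_range_sub (fun i => Stmt2Aux.AvT L (q t) (v t) (i + 1)) m
      rw [Finset.sum_sub_distrib] at h2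
      linarith
    rw [e2]
    have hg1 : g (m + 1) = 0 := by rw [hg]; simp only []; rw [hBzero (m + 1) (by omega)]; ring
    have hg2 : g m = 0 := by rw [hg]; simp only []; rw [hBzero m (by omega)]; ring
    rw [hg1, hg2, hAzero (m + 1) (by omega), hg]
    push_cast
    ring
  -- assemble the total derivative
  have hsumA : HasDerivAt (fun τ => ∑ r ∈ Finset.range m,
        ∑ idx : Fin (r + 1) → Fin D,
          L (r + 1) (q τ) idx * ∏ k : Fin (r + 1), v τ (idx k))
      (∑ r ∈ Finset.range m,
        (Stmt2Aux.CvT Γ L (q t) (v t) r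
          - ((r + 1 : ℕ) : ℝ) * Stmt2Aux.BoT L Q (q t) (v t) r)) t :=
    HasDerivAt.fun_sum fun r _ => hA r
  have hG := (hsumA.const_mul lam).fun_add hCd
  rw [halg] at hG
  have hExp : HasDerivAt (fun τ => Real.exp (lam * τ) / lam) (Real.exp (lam * t)) t := by
    have h1 : HasDerivAt (fun τ : ℝ => lam * τ) lam t := by
      simpa using (hasDerivAt_id t).const_mul lam
    have h2 := (Real.hasDerivAt_exp (lam * t)).comp t h1
    have h3 := h2.div_const lam
    convert! h3 using 1
    field_simp
  have hfinal := hExp.fun_mul hG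
  have hzero : Real.exp (lam * t) *
        (lam * ∑ r ∈ Finset.range m, ∑ idx : Fin (r + 1) → Fin D,
            L (r + 1) (q t) idx * ∏ k : Fin (r + 1), v t (idx k)
          + dotQ (L 1) Q (q t))
      + Real.exp (lam * t) / lam *
          (-lam * (lam * ∑ r ∈ Finset.range m, Stmt2Aux.AvT L (q t) (v t) (r + 1)
            + Stmt2Aux.BoT L Q (q t) (v t) 0)) = 0 := by
    have hAr : ∀ r : ℕ, Stmt2Aux.AvT L (q t) (v t) (r + 1)
        = ∑ idx : Fin (r + 1) → Fin D,
            L (r + 1) (q t) idx * ∏ k : Fin (r + 1), v t (idx k) := fun r => rfl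
    rw [hB0eq, Finset.sum_congr rfl fun r _ => hAr r]
    field_simp
    ring
  have := hfinal
  rw [hzero] at this
  exact this
end
end

section
/- (Proposition: LFI 1.) Let n ≥ 0. Suppose L_{(N)a}(q), N = 0,1,…,n, are smooth generalized Killing vectors of Γ, G(q) is a smooth function with L_{(1)a} = −G_{,a} when n > 0, the conditions (L_{(k−1)b}Q^b)_{,a} = −k(k+1) L_{(k+1)a} hold for k = 1,…,n (with the right-hand side present only for k < n, and for k = n the relation states that L_{(n−1)b}Q^b is constant), and L_{(n)a}Q^a = s₀ is constant. Then I = Σ_{N=0}^{n} L_{(N)a} t^N q̇^a + s₀ t^{n+1}/(n+1) + Σ_{N=1}^{n} (L_{(N−1)a}Q^a) t^N/N + G(q) is a first integral of q̈^a = −Γ^a_{bc}q̇^bq̇^c − Q^a. -/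
/-!
Along a solution, the Killing equation `L_{(a|b)} = 0` makes the terms quadratic in `q̇` cancel
in `d/dt (L_a q̇^a)`, leaving `−L_a Q^a`. Differentiating `I`, these terms cancel against the
derivatives of the powers of `t` in the `s₀`- and `Q`-terms, while `(L_{(k−1)b}Q^b)_{,a} = −k(k+1) L_{(k+1)a}`
makes the remaining `N L_{(N)a} q̇^a t^{N−1}` terms telescope; `L_{(1)a} = −G_{,a}` absorbs the
boundary term and `L_{(n+1)} = 0` the other one.
-/
noncomputable section
open scoped BigOperators

/-- Covariant derivative of a covector field:
`L_{a|b} = ∂L_a/∂q^b − Γ^s_{ab} L_s`. -/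
def covD1 {D : ℕ} (Γ : Conn D) (L : Vec D → Fin D → ℝ) (q : Vec D) (a b : Fin D) : ℝ :=
  pd b (fun p => L p a) q - ∑ s, Γ q s a b * L q s

/-- Generalized Killing vector: `L_{(a|b)} = 0`. -/
def IsGenKV {D : ℕ} (Γ : Conn D) (L : Vec D → Fin D → ℝ) : Prop :=
  ∀ q a b, covD1 Γ L q a b + covD1 Γ L q b a = 0

lemma fderiv_apply_eq_sum_pd {D : ℕ} (f : Vec D → ℝ) (x w : Vec D) :
    fderiv ℝ f x w = ∑ b, pd b f x * w b := by
  conv_lhs => rw [pi_eq_sum_univ' w, map_sum]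
  simp [pd, mul_comm]

lemma DifferentiableAt.hasDerivAt_comp_sum_pd {D : ℕ} {f : Vec D → ℝ} {q : ℝ → Vec D}
    {w : Vec D} {t : ℝ} (hf : DifferentiableAt ℝ f (q t))
    (hq : ∀ a, HasDerivAt (fun τ => q τ a) (w a) t) :
    HasDerivAt (fun τ => f (q τ)) (∑ b, pd b f (q t) * w b) t := by
  have h := hf.hasFDerivAt.comp_hasDerivAt t (hasDerivAt_pi.2 hq)
  rwa [fderiv_apply_eq_sum_pd] at h

namespace IsGenKV

variable {D : ℕ} {Γ : Conn D} {L : Vec D → Fin D → ℝ}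

lemma sum_covD1_mul_mul_eq_zero (hK : IsGenKV Γ L) (x w : Vec D) :
    ∑ a, ∑ b, covD1 Γ L x a b * w a * w b = 0 := by
  have hswap : ∑ a, ∑ b, covD1 Γ L x a b * w a * w b
      = ∑ a, ∑ b, covD1 Γ L x b a * w a * w b := by
    rw [Finset.sum_comm]
    exact Finset.sum_congr rfl fun a _ => Finset.sum_congr rfl fun b _ => by ring
  have hsum : ∑ a, ∑ b, (covD1 Γ L x a b + covD1 Γ L x b a) * w a * w b = 0 := by
    simp [hK x]
  simp only [add_mul, Finset.sum_add_distrib, ← hswap] at hsum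
  linarith

lemma sum_pd_mul_mul_eq (hK : IsGenKV Γ L) (x w : Vec D) :
    ∑ a, (∑ b, pd b (fun p => L p a) x * w b) * w a
      = ∑ a, L x a * ∑ b, ∑ c, Γ x a b c * w b * w c := by
  have hterm : ∀ a b, pd b (fun p => L p a) x * w b * w a
      = covD1 Γ L x a b * w a * w b + ∑ s, L x s * (Γ x s a b * w a * w b) := fun a b => by
    rw [← sub_add_cancel (pd b (fun p => L p a) x) (∑ s, Γ x s a b * L x s), add_mul, add_mul,
      Finset.sum_mul, Finset.sum_mul]
    congr 1
    · simp only [covD1]; ring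
    · exact Finset.sum_congr rfl fun s _ => by ring
  calc ∑ a, (∑ b, pd b (fun p => L p a) x * w b) * w a
      = ∑ a, ∑ b, ∑ s, L x s * (Γ x s a b * w a * w b) := by
        simp only [Finset.sum_mul, hterm, Finset.sum_add_distrib, hK.sum_covD1_mul_mul_eq_zero,
          zero_add]
    _ = ∑ a, ∑ s, ∑ b, L x s * (Γ x s a b * w a * w b) :=
        Finset.sum_congr rfl fun a _ => Finset.sum_comm
    _ = ∑ a, L x a * ∑ b, ∑ c, Γ x a b c * w b * w c := by
        rw [Finset.sum_comm]
        simp only [Finset.mul_sum]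

end IsGenKV

lemma IsSolutionOn.hasDerivAt_sum_mul_of_isGenKV {D : ℕ} {Γ : Conn D} {Q : Vec D → Fin D → ℝ}
    {s : Set ℝ} {q v : ℝ → Vec D} {L : Vec D → Fin D → ℝ} {t : ℝ}
    (hsol : IsSolutionOn Γ Q s q v) (ht : t ∈ s)
    (hL : ∀ a, DifferentiableAt ℝ (fun p => L p a) (q t)) (hK : IsGenKV Γ L) :
    HasDerivAt (fun τ => ∑ a, L (q τ) a * v τ a) (-∑ a, L (q t) a * Q (q t) a) t := by
  have hterm : ∀ a, HasDerivAt (fun τ => L (q τ) a * v τ a)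
      ((∑ b, pd b (fun p => L p a) (q t) * v t b) * v t a
        + L (q t) a * (-(∑ b, ∑ c, Γ (q t) a b c * v t b * v t c) - Q (q t) a)) t :=
    fun a => ((hL a).hasDerivAt_comp_sum_pd fun b => (hsol t ht b).1).mul (hsol t ht a).2
  refine (HasDerivAt.fun_sum fun a _ => hterm a).congr_deriv ?_
  simp only [mul_sub, mul_neg, Finset.sum_add_distrib, Finset.sum_sub_distrib,
    Finset.sum_neg_distrib, hK.sum_pd_mul_mul_eq]
  ring

lemma hasDerivAt_linearFirstIntegral_eq_zero {n : ℕ} {g h : ℕ → ℝ → ℝ} {G : ℝ → ℝ} {s₀ t : ℝ}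
    (hg : ∀ N ≤ n, HasDerivAt (g N) (-h N t) t)
    (hh : ∀ N < n, HasDerivAt (h N)
      (-(((N + 1 : ℕ) : ℝ) * (((N + 1 : ℕ) : ℝ) + 1)) * g (N + 1 + 1) t) t)
    (hG : HasDerivAt G (-g 1 t) t) (hgn : g (n + 1) t = 0) (hhn : h n t = s₀) :
    HasDerivAt (fun τ => (∑ N ∈ Finset.range (n + 1), g N τ * τ ^ N)
      + s₀ * τ ^ (n + 1) / ((n + 1 : ℕ) : ℝ)
      + (∑ N ∈ Finset.range n, h N τ * τ ^ (N + 1) / ((N + 1 : ℕ) : ℝ)) + G τ) 0 t := by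
  set a : ℕ → ℝ := fun M => ((M + 1 : ℕ) : ℝ) * g (M + 1) t * t ^ M with ha
  have h1 : HasDerivAt (fun τ => ∑ N ∈ Finset.range (n + 1), g N τ * τ ^ N)
      (∑ N ∈ Finset.range (n + 1), (-h N t * t ^ N + g N t * (N * t ^ (N - 1)))) t :=
    HasDerivAt.fun_sum fun N hN =>
      (hg N (Nat.lt_succ_iff.mp (Finset.mem_range.mp hN))).mul (hasDerivAt_pow N t)
  have h2 : HasDerivAt (fun τ => s₀ * τ ^ (n + 1) / ((n + 1 : ℕ) : ℝ)) (s₀ * t ^ n) t := by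
    refine (((hasDerivAt_pow (n + 1) t).const_mul s₀).div_const _).congr_deriv ?_
    field_simp
    simp
  have h3 : HasDerivAt (fun τ => ∑ N ∈ Finset.range n, h N τ * τ ^ (N + 1) / ((N + 1 : ℕ) : ℝ))
      (∑ N ∈ Finset.range n, (h N t * t ^ N - a (N + 1))) t := by
    refine HasDerivAt.fun_sum fun N hN => ?_
    refine (((hh N (Finset.mem_range.mp hN)).mul (hasDerivAt_pow (N + 1) t)).div_const
      _).congr_deriv ?_
    field_simp
    simp only [Nat.cast_add, Nat.cast_one, add_tsub_cancel_right, ha]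
    ring
  have hA : ∑ N ∈ Finset.range (n + 1), g N t * (N * t ^ (N - 1))
      = ∑ N ∈ Finset.range n, a N := by
    rw [Finset.sum_range_succ']
    simp only [Nat.cast_zero, zero_mul, mul_zero, add_zero, add_tsub_cancel_right, Nat.cast_add,
      Nat.cast_one, ha]
    exact Finset.sum_congr rfl fun N _ => by ring
  have hS : ∑ N ∈ Finset.range (n + 1), h N t * t ^ N
      = ∑ N ∈ Finset.range n, h N t * t ^ N + s₀ * t ^ n := by
    rw [Finset.sum_range_succ, hhn]
  have htel : ∑ N ∈ Finset.range n, a (N + 1) - ∑ N ∈ Finset.range n, a N = -g 1 t := by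
    rw [← Finset.sum_sub_distrib, Finset.sum_range_sub]
    simp [ha, hgn]
  refine (((h1.fun_add h2).fun_add h3).fun_add hG).congr_deriv ?_
  simp only [Finset.sum_add_distrib, Finset.sum_sub_distrib, neg_mul, Finset.sum_neg_distrib,
    hA, hS]
  linear_combination -htel

lemma firstIntegral_of_hasDerivAt_zero {D : ℕ} {Γ : Conn D} {Q : Vec D → Fin D → ℝ}
    {I : ℝ → Vec D → Vec D → ℝ}
    (hI : ∀ a b (q v : ℝ → Vec D), IsSolutionOn Γ Q (Set.Ioo a b) q v →
      ∀ t ∈ Set.Ioo a b, HasDerivAt (fun τ => I τ (q τ) (v τ)) 0 t) :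
    FirstIntegral Γ Q I := by
  intro a b q v hsol t₁ ht₁ t₂ ht₂
  have hI' := hI a b q v hsol
  exact isOpen_Ioo.is_const_of_deriv_eq_zero isPreconnected_Ioo
    (fun t ht => (hI' t ht).differentiableAt.differentiableWithinAt) (fun t ht => (hI' t ht).deriv)
    ht₁ ht₂

/-- `L N` represents `L_{(N)a}`; the components with `N > n` vanish, which encodes the
"present only if" conventions (in particular `L_{(1)a}(n>0)` and, for `k = n`, the constancy
of `L_{(n−1)b}Q^b`). -/
theorem stmt3_general {D n : ℕ}
    (Γ : Conn D) (Q : Vec D → Fin D → ℝ)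
    (hQ : ∀ a, ContDiff ℝ (⊤ : ℕ∞) fun q => Q q a)
    (L : ℕ → Vec D → Fin D → ℝ) (G : Vec D → ℝ) (s₀ : ℝ)
    (hLsm : ∀ N a, ContDiff ℝ (⊤ : ℕ∞) fun q => L N q a)
    (hL0 : ∀ N, n < N → L N = fun _ _ => 0)
    (hG : ContDiff ℝ (⊤ : ℕ∞) G)
    -- the `L_{(N)a}` are generalized Killing vectors
    (hKV : ∀ N, N ≤ n → IsGenKV Γ (L N))
    -- `L_{(1)a}(n>0) = −G_{,a}`
    (hG1 : ∀ q a, L 1 q a = -pd a G q)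
    -- `(L_{(k−1)b}Q^b)_{,a} = −k(k+1) L_{(k+1)a}`, `k = 1,…,n`
    (hc : ∀ k, 1 ≤ k → k ≤ n → ∀ q (a : Fin D),
      pd a (fun p => ∑ b, L (k - 1) p b * Q p b) q =
        -((k : ℝ) * ((k : ℝ) + 1)) * L (k + 1) q a)
    -- `L_{(n)a} Q^a = s₀` is a constant
    (hs₀ : ∀ q, ∑ a, L n q a * Q q a = s₀) :
    FirstIntegral Γ Q (fun t q v =>
      (∑ N ∈ Finset.range (n + 1), (∑ a, L N q a * v a) * t ^ N)
      + s₀ * t ^ (n + 1) / ((n + 1 : ℕ) : ℝ)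
      + (∑ N ∈ Finset.range n, (∑ a, L N q a * Q q a) * t ^ (N + 1) / ((N + 1 : ℕ) : ℝ))
      + G q) := by
  refine firstIntegral_of_hasDerivAt_zero fun A B q v hsol t ht => ?_
  have hq : ∀ a, HasDerivAt (fun τ => q τ a) (v t a) t := fun a => (hsol t ht a).1
  refine hasDerivAt_linearFirstIntegral_eq_zero (g := fun N τ => ∑ a, L N (q τ) a * v τ a)
    (h := fun N τ => ∑ a, L N (q τ) a * Q (q τ) a) ?_ ?_ ?_ ?_ (hs₀ _)
  · intro N hN
    exact hsol.hasDerivAt_sum_mul_of_isGenKV ht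
      (fun a => (hLsm N a).differentiable (by simp) _) (hKV N hN)
  · intro N hN
    have hLQ : ContDiff ℝ (⊤ : ℕ∞) fun p => ∑ b, L N p b * Q p b :=
      ContDiff.sum fun b _ => (hLsm N b).mul (hQ b)
    refine ((hLQ.differentiable (by simp) _).hasDerivAt_comp_sum_pd hq).congr_deriv ?_
    have hcN : ∀ a, pd a (fun p => ∑ b, L N p b * Q p b) (q t)
        = -(((N + 1 : ℕ) : ℝ) * (((N + 1 : ℕ) : ℝ) + 1)) * L (N + 1 + 1) (q t) a :=
      hc (N + 1) (by omega) (by omega) (q t)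
    simp only [hcN, Finset.mul_sum]
    exact Finset.sum_congr rfl fun a _ => by ring
  · refine ((hG.differentiable (by simp) _).hasDerivAt_comp_sum_pd hq).congr_deriv ?_
    simp [hG1]
  · simp [hL0 (n + 1) (by omega)]

/-- Proposition: LFI 1. `L N` represents the generalized Killing
vector `L_{(N)a}`, `N = 0,…,n`; components with `N > n` are absent, i.e. vanish,
which encodes the "present only if" conventions (in particular `L_{(1)a}(n>0)`
and, for `k = n`, the constancy of `L_{(n−1)b}Q^b`). -/
theorem stmt3 {D n : ℕ}
    (Γ : Conn D) (Q : Vec D → Fin D → ℝ)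
    (hΓsym : ∀ q a b c, Γ q a b c = Γ q a c b)
    (hΓ : ∀ a b c, ContDiff ℝ (⊤ : ℕ∞) fun q => Γ q a b c)
    (hQ : ∀ a, ContDiff ℝ (⊤ : ℕ∞) fun q => Q q a)
    (L : ℕ → Vec D → Fin D → ℝ) (G : Vec D → ℝ) (s₀ : ℝ)
    (hLsm : ∀ N a, ContDiff ℝ (⊤ : ℕ∞) fun q => L N q a)
    (hL0 : ∀ N, n < N → L N = fun _ _ => 0)
    (hG : ContDiff ℝ (⊤ : ℕ∞) G)
    -- the `L_{(N)a}` are generalized Killing vectors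
    (hKV : ∀ N, N ≤ n → IsGenKV Γ (L N))
    -- `L_{(1)a}(n>0) = −G_{,a}`
    (hG1 : ∀ q a, L 1 q a = -pd a G q)
    -- `(L_{(k−1)b}Q^b)_{,a} = −k(k+1) L_{(k+1)a}`, `k = 1,…,n`
    (hc : ∀ k, 1 ≤ k → k ≤ n → ∀ q (a : Fin D),
      pd a (fun p => ∑ b, L (k - 1) p b * Q p b) q =
        -((k : ℝ) * ((k : ℝ) + 1)) * L (k + 1) q a)
    -- `L_{(n)a} Q^a = s₀` is a constant
    (hs₀ : ∀ q, ∑ a, L n q a * Q q a = s₀) :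
    FirstIntegral Γ Q (fun t q v =>
      (∑ N ∈ Finset.range (n + 1), (∑ a, L N q a * v a) * t ^ N)
      + s₀ * t ^ (n + 1) / ((n + 1 : ℕ) : ℝ)
      + (∑ N ∈ Finset.range n, (∑ a, L N q a * Q q a) * t ^ (N + 1) / ((N + 1 : ℕ) : ℝ))
      + G q) :=
  stmt3_general Γ Q hQ L G s₀ hLsm hL0 hG hKV hG1 hc hs₀
end
end

section
/- (Proposition: LFI 1.1.) Let ℓ > 0. Suppose L_{(2N−1)a}(q), N = 1,…,ℓ, are smooth generalized Killing vectors of Γ satisfying (L_{(2k−1)b}Q^b)_{,a} = −2k(2k+1) L_{(2k+1)a} for k = 1,…,ℓ−1 (when ℓ > 1), G(q) is a smooth function with L_{(1)a} = −G_{,a}, and s₁ = L_{(2ℓ−1)a}Q^a is constant. Then I = Σ_{N=1}^{ℓ} t^{2N−1} L_{(2N−1)a} q̇^a + s₁ t^{2ℓ}/(2ℓ) + Σ_{N=1}^{ℓ−1} (L_{(2N−1)a}Q^a) t^{2N}/(2N) + G(q) is a first integral of q̈^a = −Γ^a_{bc}q̇^bq̇^c − Q^a. -/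
/-!
Along a solution, a generalized Killing vector `L` obeys `d/dt (L_a q̇^a) = -L_a Q^a`: the Killing
equation makes `∂_b L_a q̇^a q̇^b` equal to `L_s Γ^s_{ab} q̇^a q̇^b`, which cancels the connection term
of the equations of motion. Writing `S_N = L_{(2N-1)a} q̇^a` and `P_N = L_{(2N-1)a} Q^a`, the
hypotheses give `S_N' = -P_N`, `P_N' = -2N(2N+1) S_{N+1}`, `G' = -S_1` and `P_ℓ = s₁`. In the
derivative of `I` the `P_N`-terms cancel in pairs and the rest telescopes,
`Σ_{N<ℓ} ((2N-1) t^{2N-2} S_N - (2N+1) t^{2N} S_{N+1}) + (2ℓ-1) t^{2ℓ-2} S_ℓ - S_1 = 0`.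
-/

noncomputable section
open scoped BigOperators

open Finset

theorem Finset.sum_Icc_one_eq_sum_range {M : Type*} [AddCommMonoid M] (f : ℕ → M) (n : ℕ) :
    ∑ N ∈ Icc 1 n, f N = ∑ i ∈ range n, f (i + 1) := by
  rw [← Ico_add_one_right_eq_Icc, sum_Ico_eq_sum_range, Nat.add_sub_cancel]
  simp only [add_comm]

theorem sum_Icc_odd_eq_sum_range (m : ℕ) (A B : ℕ → ℝ) (c t : ℝ) (hB : B (2 * m + 1) = c) :
    (∑ N ∈ Icc 1 (m + 1), t ^ (2 * N - 1) * A (2 * N - 1))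
      + c * t ^ (2 * (m + 1)) / ((2 * (m + 1) : ℕ) : ℝ)
      + ∑ N ∈ Icc 1 (m + 1 - 1), B (2 * N - 1) * t ^ (2 * N) / ((2 * N : ℕ) : ℝ)
      = ∑ i ∈ range (m + 1),
          (t ^ (2 * i + 1) * A (2 * i + 1) + B (2 * i + 1) * t ^ (2 * i + 2) / (2 * i + 2)) := by
  have hodd : ∀ i, 2 * (i + 1) - 1 = 2 * i + 1 := fun i => by omega
  rw [sum_Icc_one_eq_sum_range, sum_Icc_one_eq_sum_range, Nat.add_sub_cancel, sum_add_distrib,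
    sum_range_succ (fun i => B (2 * i + 1) * t ^ (2 * i + 2) / (2 * i + 2)), hB]
  simp only [hodd]
  push_cast
  simp only [mul_add, mul_one]
  ring

theorem hasDerivAt_pow_mul_add_mul_pow_div (i : ℕ) {S P : ℝ → ℝ} {P' t : ℝ}
    (hS : HasDerivAt S (-P t) t) (hP : HasDerivAt P P' t) :
    HasDerivAt (fun τ => τ ^ (2 * i + 1) * S τ + P τ * τ ^ (2 * i + 2) / (2 * i + 2))
      ((2 * i + 1) * t ^ (2 * i) * S t + P' * t ^ (2 * i + 2) / (2 * i + 2)) t := by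
  refine (((hasDerivAt_pow _ t).mul hS).add
    ((hP.mul (hasDerivAt_pow _ t)).div_const _)).congr_deriv ?_
  simp only [Nat.add_sub_cancel]
  field_simp
  push_cast
  ring

theorem hasDerivAt_sum_pow_mul_add_mul_pow_div_eq_zero (m : ℕ) {S P : ℕ → ℝ → ℝ}
    {g : ℝ → ℝ} {t : ℝ} (hS : ∀ i ≤ m, HasDerivAt (S i) (-P i t) t)
    (hP : ∀ i < m, HasDerivAt (P i) (-((2 * i + 2) * (2 * i + 3)) * S (i + 1) t) t)
    (hPm : HasDerivAt (P m) 0 t) (hg : HasDerivAt g (-S 0 t) t) :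
    HasDerivAt (fun τ => ∑ i ∈ range (m + 1),
        (τ ^ (2 * i + 1) * S i τ + P i τ * τ ^ (2 * i + 2) / (2 * i + 2)) + g τ) 0 t := by
  set T : ℕ → ℝ := fun i => (2 * i + 1) * t ^ (2 * i) * S i t
  have hblock : ∀ i < m, HasDerivAt
      (fun τ => τ ^ (2 * i + 1) * S i τ + P i τ * τ ^ (2 * i + 2) / (2 * i + 2))
      (T i - T (i + 1)) t := fun i hi =>
    (hasDerivAt_pow_mul_add_mul_pow_div i (hS i hi.le) (hP i hi)).congr_deriv (by
      simp only [T]; push_cast; field_simp; ring)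
  have htop : HasDerivAt
      (fun τ => τ ^ (2 * m + 1) * S m τ + P m τ * τ ^ (2 * m + 2) / (2 * m + 2)) (T m) t :=
    (hasDerivAt_pow_mul_add_mul_pow_div m (hS m le_rfl) hPm).congr_deriv
      (by simp only [T, zero_mul, zero_div, add_zero])
  simp only [sum_range_succ]
  refine (((HasDerivAt.fun_sum fun i hi => hblock i (mem_range.1 hi)).add htop).add
    hg).congr_deriv ?_
  rw [sum_range_sub']
  simp [T]

section

variable {D : ℕ}

theorem hasDerivAt_comp_eq_sum_pd {f : Vec D → ℝ} {q : ℝ → Vec D} {w : Vec D} {t : ℝ}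
    (hf : DifferentiableAt ℝ f (q t)) (hq : ∀ a, HasDerivAt (fun τ => q τ a) (w a) t) :
    HasDerivAt (fun τ => f (q τ)) (∑ a, pd a f (q t) * w a) t := by
  refine (hf.hasFDerivAt.comp_hasDerivAt t (hasDerivAt_pi.2 hq)).congr_deriv ?_
  conv_lhs => rw [pi_eq_sum_univ' w, map_sum]
  simp [pd, mul_comm]

theorem IsGenKV.sum_covD1_mul_mul {Γ : Conn D} {L : Vec D → Fin D → ℝ}
    (hL : IsGenKV Γ L) (q w : Vec D) :
    ∑ a, ∑ b, covD1 Γ L q a b * w a * w b = 0 := by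
  have hsymm : ∑ a, ∑ b, covD1 Γ L q a b * w a * w b
      = ∑ a, ∑ b, covD1 Γ L q b a * w a * w b := by
    rw [sum_comm]
    exact sum_congr rfl fun a _ => sum_congr rfl fun b _ => by ring
  have hsum : ∑ a, ∑ b, (covD1 Γ L q a b + covD1 Γ L q b a) * w a * w b = 0 := by
    simp [hL q]
  simp only [add_mul, sum_add_distrib, ← hsymm] at hsum
  linarith

theorem IsGenKV.sum_pd_mul_mul {Γ : Conn D} {L : Vec D → Fin D → ℝ}
    (hL : IsGenKV Γ L) (q w : Vec D) :
    ∑ a, ∑ b, pd b (fun p => L p a) q * w b * w a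
      = ∑ s, L q s * ∑ a, ∑ b, Γ q s a b * w a * w b := by
  have hK := hL.sum_covD1_mul_mul q w
  simp only [covD1, sub_mul, sum_sub_distrib, sub_eq_zero] at hK
  calc _ = ∑ a, ∑ b, pd b (fun p => L p a) q * w a * w b :=
        sum_congr rfl fun a _ => sum_congr rfl fun b _ => by ring
    _ = _ := by
      rw [hK]
      simp only [sum_mul, mul_sum]
      conv_rhs => rw [sum_comm]
      refine sum_congr rfl fun a _ => ?_
      rw [sum_comm]
      exact sum_congr rfl fun b _ => sum_congr rfl fun s _ => by ring

theorem IsGenKV.hasDerivAt_sum_mul_velocity {Γ : Conn D} {Q : Vec D → Fin D → ℝ}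
    {L : Vec D → Fin D → ℝ} {s : Set ℝ} {q v : ℝ → Vec D} {t : ℝ}
    (hL : IsGenKV Γ L) (hLd : ∀ a, Differentiable ℝ fun p => L p a)
    (hsol : IsSolutionOn Γ Q s q v) (ht : t ∈ s) :
    HasDerivAt (fun τ => ∑ a, L (q τ) a * v τ a) (-∑ a, L (q t) a * Q (q t) a) t := by
  refine (HasDerivAt.fun_sum fun a _ =>
    (hasDerivAt_comp_eq_sum_pd (hLd a _) fun b => (hsol t ht b).1).fun_mul
      (hsol t ht a).2).congr_deriv ?_
  simp only [sum_mul, sum_add_distrib, hL.sum_pd_mul_mul, mul_sub, mul_neg, sum_sub_distrib,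
    sum_neg_distrib]
  ring

/-- The function `I` of the proposition for `ℓ = m + 1`, with `K i` standing for `L_{(2i+1)}`. -/
def killingPolyIntegral (m : ℕ) (K : ℕ → Vec D → Fin D → ℝ) (Q : Vec D → Fin D → ℝ)
    (G : Vec D → ℝ) (t : ℝ) (q v : Vec D) : ℝ :=
  ∑ i ∈ range (m + 1), (t ^ (2 * i + 1) * ∑ a, K i q a * v a
    + (∑ a, K i q a * Q q a) * t ^ (2 * i + 2) / (2 * i + 2)) + G q

variable {Γ : Conn D} {Q : Vec D → Fin D → ℝ} {K : ℕ → Vec D → Fin D → ℝ} {G : Vec D → ℝ}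
  {c : ℝ} (m : ℕ)

theorem IsSolutionOn.hasDerivAt_killingPolyIntegral {s : Set ℝ} {q v : ℝ → Vec D} {t : ℝ}
    (hsol : IsSolutionOn Γ Q s q v) (ht : t ∈ s)
    (hQ : ∀ a, Differentiable ℝ fun p => Q p a)
    (hKd : ∀ i ≤ m, ∀ a, Differentiable ℝ fun p => K i p a) (hG : Differentiable ℝ G)
    (hKV : ∀ i ≤ m, IsGenKV Γ (K i))
    (hc : ∀ i < m, ∀ p a, pd a (fun p => ∑ b, K i p b * Q p b) p
      = -((2 * i + 2) * (2 * i + 3)) * K (i + 1) p a)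
    (hG1 : ∀ p a, K 0 p a = -pd a G p) (hc_top : ∀ p, ∑ a, K m p a * Q p a = c) :
    HasDerivAt (fun τ => killingPolyIntegral m K Q G τ (q τ) (v τ)) 0 t := by
  have hq : ∀ a, HasDerivAt (fun τ => q τ a) (v t a) t := fun a => (hsol t ht a).1
  refine hasDerivAt_sum_pow_mul_add_mul_pow_div_eq_zero m
    (S := fun i τ => ∑ a, K i (q τ) a * v τ a) (P := fun i τ => ∑ a, K i (q τ) a * Q (q τ) a)
    (fun i hi => (hKV i hi).hasDerivAt_sum_mul_velocity (hKd i hi) hsol ht)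
    (fun i hi => ?_) ?_ ?_
  · have hPd : Differentiable ℝ fun p => ∑ a, K i p a * Q p a :=
      Differentiable.fun_sum fun a _ => (hKd i hi.le a).mul (hQ a)
    refine (hasDerivAt_comp_eq_sum_pd (hPd _) hq).congr_deriv ?_
    simp only [hc i hi, mul_sum]
    exact sum_congr rfl fun a _ => by ring
  · simp only [hc_top]
    exact hasDerivAt_const t c
  · refine (hasDerivAt_comp_eq_sum_pd (hG _) hq).congr_deriv ?_
    simp [hG1]

theorem firstIntegral_killingPolyIntegral
    (hQ : ∀ a, Differentiable ℝ fun p => Q p a)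
    (hKd : ∀ i ≤ m, ∀ a, Differentiable ℝ fun p => K i p a) (hG : Differentiable ℝ G)
    (hKV : ∀ i ≤ m, IsGenKV Γ (K i))
    (hc : ∀ i < m, ∀ p a, pd a (fun p => ∑ b, K i p b * Q p b) p
      = -((2 * i + 2) * (2 * i + 3)) * K (i + 1) p a)
    (hG1 : ∀ p a, K 0 p a = -pd a G p) (hc_top : ∀ p, ∑ a, K m p a * Q p a = c) :
    FirstIntegral Γ Q (killingPolyIntegral m K Q G) := by
  intro a b q v hsol t₁ ht₁ t₂ ht₂
  have hder : ∀ t ∈ Set.Ioo a b,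
      HasDerivAt (fun τ => killingPolyIntegral m K Q G τ (q τ) (v τ)) 0 t := fun t ht =>
    hsol.hasDerivAt_killingPolyIntegral m ht hQ hKd hG hKV hc hG1 hc_top
  exact isOpen_Ioo.is_const_of_deriv_eq_zero isPreconnected_Ioo
    (fun t ht => (hder t ht).differentiableAt.differentiableWithinAt)
    (fun t ht => (hder t ht).deriv) ht₁ ht₂

end

theorem stmt5_general {D : ℕ} (ℓ : ℕ) (hℓ : 1 ≤ ℓ)
    (Γ : Conn D) (Q : Vec D → Fin D → ℝ)
    (hQ : ∀ a, ContDiff ℝ (⊤ : ℕ∞) fun q => Q q a)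
    (L : ℕ → Vec D → Fin D → ℝ) (G : Vec D → ℝ) (s₁ : ℝ)
    (hLsm : ∀ N, 1 ≤ N → N ≤ ℓ → ∀ a, ContDiff ℝ (⊤ : ℕ∞) fun q => L (2 * N - 1) q a)
    (hG : ContDiff ℝ (⊤ : ℕ∞) G)
    -- the `L_{(2N−1)a}`, `N = 1,…,ℓ`, are generalized Killing vectors
    (hKV : ∀ N, 1 ≤ N → N ≤ ℓ → IsGenKV Γ (L (2 * N - 1)))
    -- `(L_{(2k−1)b}Q^b)_{,a} = −2k(2k+1) L_{(2k+1)a}`, `k = 1,…,ℓ−1` (for `ℓ > 1`)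
    (hc : ∀ k, 1 ≤ k → k + 1 ≤ ℓ → ∀ q (a : Fin D),
      pd a (fun p => ∑ b, L (2 * k - 1) p b * Q p b) q =
        -(2 * (k : ℝ) * (2 * (k : ℝ) + 1)) * L (2 * k + 1) q a)
    -- `L_{(1)a} = −G_{,a}` is a gradient generalized Killing vector
    (hG1 : ∀ q a, L 1 q a = -pd a G q)
    -- `s₁ = L_{(2ℓ−1)a}Q^a` is a constant
    (hs₁ : ∀ q, ∑ a, L (2 * ℓ - 1) q a * Q q a = s₁) :
    FirstIntegral Γ Q (fun t q v =>
      (∑ N ∈ Finset.Icc 1 ℓ, t ^ (2 * N - 1) * ∑ a, L (2 * N - 1) q a * v a)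
      + s₁ * t ^ (2 * ℓ) / ((2 * ℓ : ℕ) : ℝ)
      + (∑ N ∈ Finset.Icc 1 (ℓ - 1),
          (∑ a, L (2 * N - 1) q a * Q q a) * t ^ (2 * N) / ((2 * N : ℕ) : ℝ))
      + G q) := by
  obtain ⟨m, rfl⟩ : ∃ m, ℓ = m + 1 := ⟨ℓ - 1, by omega⟩
  have hodd : ∀ i, 2 * (i + 1) - 1 = 2 * i + 1 := fun i => by omega
  have hc_top : ∀ p, ∑ a, L (2 * m + 1) p a * Q p a = s₁ := by simpa only [hodd] using hs₁
  have hI := firstIntegral_killingPolyIntegral (K := fun i => L (2 * i + 1)) m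
    (fun a => (hQ a).differentiable (by simp))
    (fun i hi a => by
      simpa only [hodd] using (hLsm (i + 1) (by omega) (by omega) a).differentiable (by simp))
    (hG.differentiable (by simp))
    (fun i hi => by simpa only [hodd] using hKV (i + 1) (by omega) (by omega))
    (fun i hi p a => by
      have h := hc (i + 1) (by omega) (by omega) p a
      simp only [hodd] at h
      rw [h]
      push_cast
      ring)
    hG1 hc_top
  convert hI using 1
  funext t p w
  exact congrArg (· + G p) (sum_Icc_odd_eq_sum_range m (fun j => ∑ a, L j p a * w a)
    (fun j => ∑ a, L j p a * Q p a) s₁ t (hc_top p))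

/-- Proposition: LFI 1.1. `L j` represents the vector `L_{(j)a}`;
only the odd-indexed members `L (2N-1)`, `N = 1,…,ℓ`, occur. -/
theorem stmt5 {D : ℕ} (ℓ : ℕ) (hℓ : 1 ≤ ℓ)
    (Γ : Conn D) (Q : Vec D → Fin D → ℝ)
    (hΓsym : ∀ q a b c, Γ q a b c = Γ q a c b)
    (hΓ : ∀ a b c, ContDiff ℝ (⊤ : ℕ∞) fun q => Γ q a b c)
    (hQ : ∀ a, ContDiff ℝ (⊤ : ℕ∞) fun q => Q q a)
    (L : ℕ → Vec D → Fin D → ℝ) (G : Vec D → ℝ) (s₁ : ℝ)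
    (hLsm : ∀ N, 1 ≤ N → N ≤ ℓ → ∀ a, ContDiff ℝ (⊤ : ℕ∞) fun q => L (2 * N - 1) q a)
    (hG : ContDiff ℝ (⊤ : ℕ∞) G)
    -- the `L_{(2N−1)a}`, `N = 1,…,ℓ`, are generalized Killing vectors
    (hKV : ∀ N, 1 ≤ N → N ≤ ℓ → IsGenKV Γ (L (2 * N - 1)))
    -- `(L_{(2k−1)b}Q^b)_{,a} = −2k(2k+1) L_{(2k+1)a}`, `k = 1,…,ℓ−1` (for `ℓ > 1`)
    (hc : ∀ k, 1 ≤ k → k + 1 ≤ ℓ → ∀ q (a : Fin D),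
      pd a (fun p => ∑ b, L (2 * k - 1) p b * Q p b) q =
        -(2 * (k : ℝ) * (2 * (k : ℝ) + 1)) * L (2 * k + 1) q a)
    -- `L_{(1)a} = −G_{,a}` is a gradient generalized Killing vector
    (hG1 : ∀ q a, L 1 q a = -pd a G q)
    -- `s₁ = L_{(2ℓ−1)a}Q^a` is a constant
    (hs₁ : ∀ q, ∑ a, L (2 * ℓ - 1) q a * Q q a = s₁) :
    FirstIntegral Γ Q (fun t q v =>
      (∑ N ∈ Finset.Icc 1 ℓ, t ^ (2 * N - 1) * ∑ a, L (2 * N - 1) q a * v a)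
      + s₁ * t ^ (2 * ℓ) / ((2 * ℓ : ℕ) : ℝ)
      + (∑ N ∈ Finset.Icc 1 (ℓ - 1),
          (∑ a, L (2 * N - 1) q a * Q q a) * t ^ (2 * N) / ((2 * N : ℕ) : ℝ))
      + G q) :=
  stmt5_general ℓ hℓ Γ Q hQ L G s₁ hLsm hG hKV hc hG1 hs₁
end
end
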